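/- arXiv:0904.3803 — 4 statements merged into one kernel-verified Lean document; each statement's English description precedes it below -/
import Mathlib

section
/- Let N ≥ 1 and let p : (0,+∞) × ℝ^N × ℝ^N → [0,+∞) be measurable and satisfy the Gaussian bound p(t,z,z') ≤ C₀ t^{-N/2} e^{ω₁ t - |z-z'|²/(ω₂ t)} for some constants C₀ > 0, ω₁ ≥ 0, ω₂ > 0. Let v₀, w₀ : ℝ^N → ℝ be bounded measurable functions such that sup{ |v₀(z) - w₀(z)| : z = (z₁,…,z_N), z₁ ≥ A } → 0 as A → +∞, and define v(t,z) = ∫_{ℝ^N} p(t,z,z') v₀(z') dz' and w(t,z) = ∫_{ℝ^N} p(t,z,z') w₀(z') dz' for t > 0. Then for every t > 0, sup{ |v(t,z) - w(t,z)| : z₁ ≥ B } → 0 as B → +∞. -/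
open Filter MeasureTheory Set

/-- Heat extension of an initial datum on ℝ. -/
noncomputable def heatExt (u0 : ℝ → ℝ) (t x : ℝ) : ℝ :=
  if t = 0 then u0 x
  else (Real.sqrt (4 * Real.pi * t))⁻¹ * ∫ y : ℝ, Real.exp (-(x - y)^2 / (4 * t)) * u0 y

/-- Combustion-type nonlinearity with ignition temperature θ. -/
def IsCombustion (f : ℝ → ℝ) (θ : ℝ) : Prop :=
  Continuous f ∧
  (∀ s, s ≤ θ → f s = 0) ∧
  (∀ s, 1 ≤ s → f s = 0) ∧
  (∀ s, θ < s → s < 1 → 0 < f s) ∧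
  ContDiffOn ℝ 1 f (Set.Icc 0 1) ∧
  ∃ l, 0 < l ∧
    Filter.Tendsto (fun s => f (1 - s) / s) (nhdsWithin 0 (Set.Ioi 0)) (nhds l)

/-- A travelling front of u_t = u_xx + f(u) connecting γ to 1 with speed c. -/
def IsTravellingFront (f : ℝ → ℝ) (γ c : ℝ) (φ : ℝ → ℝ) : Prop :=
  ContDiff ℝ 2 φ ∧
  (∀ x, deriv (deriv φ) x + c * deriv φ x + f (φ x) = 0) ∧
  (∀ x, γ < φ x ∧ φ x < 1) ∧
  Filter.Tendsto φ Filter.atBot (nhds 1) ∧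
  Filter.Tendsto φ Filter.atTop (nhds γ)

/-- Front-like initial condition with respect to ignition temperature θ. -/
def IsFrontLike (u0 : ℝ → ℝ) (θ : ℝ) : Prop :=
  UniformContinuous u0 ∧
  (∀ x, 0 ≤ u0 x ∧ u0 x ≤ 1) ∧
  Filter.limsup u0 Filter.atTop < θ ∧
  θ < Filter.liminf u0 Filter.atBot

/-- Classical solution of the Cauchy problem u_t = u_xx + f(u), u(0,·) = u₀,
with values in [0,1]. -/
def IsClassicalSolution (f u0 : ℝ → ℝ) (u : ℝ → ℝ → ℝ) : Prop :=
  ContinuousOn (fun p : ℝ × ℝ => u p.1 p.2) (Set.Ici 0 ×ˢ Set.univ) ∧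
  (∀ t x, 0 ≤ t → 0 ≤ u t x ∧ u t x ≤ 1) ∧
  (∀ x, u 0 x = u0 x) ∧
  ∃ ut ux uxx : ℝ → ℝ → ℝ,
    ContinuousOn (fun p : ℝ × ℝ => ut p.1 p.2) (Set.Ioi 0 ×ˢ Set.univ) ∧
    ContinuousOn (fun p : ℝ × ℝ => ux p.1 p.2) (Set.Ioi 0 ×ˢ Set.univ) ∧
    ContinuousOn (fun p : ℝ × ℝ => uxx p.1 p.2) (Set.Ioi 0 ×ˢ Set.univ) ∧
    ∀ t x, 0 < t →
      HasDerivAt (fun s => u s x) (ut t x) t ∧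
      HasDerivAt (fun y => u t y) (ux t x) x ∧
      HasDerivAt (fun y => ux t y) (uxx t x) x ∧
      ut t x = uxx t x + f (u t x)

/-- The lower spreading speed c_*(u₀). -/
noncomputable def lowerSpread (u : ℝ → ℝ → ℝ) : ℝ :=
  sSup {c : ℝ | ∀ c' < c,
    Filter.Tendsto (fun t => sInf (u t '' Set.Iic (c' * t))) Filter.atTop (nhds 1)}

/-- The upper spreading speed c^*(u₀). -/
noncomputable def upperSpread (u : ℝ → ℝ → ℝ) : ℝ :=
  sInf {c : ℝ | ∀ c' > c,
    Filter.limsup (fun t => sSup (u t '' Set.Ici (c' * t))) Filter.atTop < 1}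

/-- Admissible sequence used for the oscillating initial condition. -/
def IsAdmissibleSeq (x : ℕ → ℝ) : Prop :=
  x 0 = 1 ∧ (∀ n, 3 ≤ x (n + 1) - x n) ∧
  Filter.Tendsto (fun n => x (n + 1) / x n) Filter.atTop Filter.atTop

/-- The oscillating front-like initial condition associated to α < β and (x_n). -/
def IsOscInit (α β : ℝ) (x : ℕ → ℝ) (u0 : ℝ → ℝ) : Prop :=
  Continuous u0 ∧
  (∀ y, α ≤ u0 y ∧ u0 y ≤ 1) ∧
  (∀ y, y ≤ (0 : ℝ) → u0 y = 1) ∧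
  (∀ y ∈ Set.Icc (0 : ℝ) 2, u0 y = 1 - (1 - α) * y / 2) ∧
  ∀ n : ℕ,
    (∀ y ∈ Set.Icc (x (2 * n) + 1) (x (2 * n + 1) - 1), u0 y = α) ∧
    (∀ y ∈ Set.Icc (x (2 * n + 1) - 1) (x (2 * n + 1) + 1),
      u0 y = α + (β - α) * (y - x (2 * n + 1) + 1) / 2) ∧
    (∀ y ∈ Set.Icc (x (2 * n + 1) + 1) (x (2 * n + 2) - 1), u0 y = β) ∧
    (∀ y ∈ Set.Icc (x (2 * n + 2) - 1) (x (2 * n + 2) + 1),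
      u0 y = β - (β - α) * (y - x (2 * n + 2) + 1) / 2)


section AuxGaussian

open Complex in
lemma aux_integrable_rexp_neg_mul_sq_norm {V : Type*} [NormedAddCommGroup V]
    [InnerProductSpace ℝ V] [FiniteDimensional ℝ V] [MeasurableSpace V] [BorelSpace V]
    {b : ℝ} (hb : 0 < b) :
    Integrable (fun v : V => Real.exp (-b * ‖v‖ ^ 2)) := by
  have h := (GaussianFourier.integrable_cexp_neg_mul_sq_norm_add (V := V) (b := (b : ℂ))
      (by simpa using hb) 0 0).norm
  refine h.congr (Filter.Eventually.of_forall fun v => ?_)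
  simp [Complex.norm_exp, ← Complex.ofReal_pow]

lemma aux_sq_apply_le_norm_sq {N : ℕ} (z : EuclideanSpace ℝ (Fin N)) (i : Fin N) :
    (z i) ^ 2 ≤ ‖z‖ ^ 2 := by
  rw [EuclideanSpace.norm_eq, Real.sq_sqrt (by positivity)]
  have := Finset.single_le_sum (f := fun j => ‖z j‖ ^ 2)
    (fun j _ => by positivity) (Finset.mem_univ i)
  simpa [Real.norm_eq_abs, sq_abs] using this

end AuxGaussian

set_option maxHeartbeats 1000000 in
/-- propagation of asymptotic equality at +∞ for kernels with a Gaussian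
upper bound. -/
theorem gaussian_kernel_asymptotic_equality
    (N : ℕ) (hN : 0 < N)
    (p : ℝ → EuclideanSpace ℝ (Fin N) → EuclideanSpace ℝ (Fin N) → ℝ)
    (hp_meas : Measurable fun q : ℝ × EuclideanSpace ℝ (Fin N) × EuclideanSpace ℝ (Fin N) =>
      p q.1 q.2.1 q.2.2)
    (hp_nonneg : ∀ t z z', 0 ≤ p t z z')
    (C0 ω1 ω2 : ℝ) (hC0 : 0 < C0) (hω1 : 0 ≤ ω1) (hω2 : 0 < ω2)
    (hp_bound : ∀ t, 0 < t → ∀ z z',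
      p t z z' ≤ C0 * t ^ (-(N : ℝ) / 2) * Real.exp (ω1 * t - ‖z - z'‖ ^ 2 / (ω2 * t)))
    (v0 w0 : EuclideanSpace ℝ (Fin N) → ℝ)
    (hv0m : Measurable v0) (hw0m : Measurable w0)
    (M : ℝ) (hv0b : ∀ z, |v0 z| ≤ M) (hw0b : ∀ z, |w0 z| ≤ M)
    (hclose : ∀ ε, 0 < ε → ∃ A : ℝ, ∀ z : EuclideanSpace ℝ (Fin N),
      A ≤ z ⟨0, hN⟩ → |v0 z - w0 z| ≤ ε) :
    ∀ t, 0 < t → ∀ ε, 0 < ε → ∃ B : ℝ, ∀ z : EuclideanSpace ℝ (Fin N),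
      B ≤ z ⟨0, hN⟩ →
      |(∫ z', p t z z' * v0 z') - (∫ z', p t z z' * w0 z')| ≤ ε := by
  intro t ht ε hε
  classical
  set n1 : Fin N := ⟨0, hN⟩ with hn1
  set b : ℝ := (ω2 * t)⁻¹ with hbdef
  have hb : 0 < b := by positivity
  have hb2 : 0 < b / 2 := by positivity
  set c : ℝ := C0 * t ^ (-(N : ℝ) / 2) * Real.exp (ω1 * t) with hcdef
  have htpow : 0 < t ^ (-(N : ℝ) / 2) := Real.rpow_pos_of_pos ht _
  have hc : 0 < c := by positivity
  have hM : 0 ≤ M := le_trans (abs_nonneg _) (hv0b 0)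
  -- Gaussian domination
  have hpG : ∀ z z' : EuclideanSpace ℝ (Fin N),
      p t z z' ≤ c * Real.exp (-b * ‖z - z'‖ ^ 2) := by
    intro z z'
    have h := hp_bound t ht z z'
    have e : ω1 * t - ‖z - z'‖ ^ 2 / (ω2 * t) = ω1 * t + (-b * ‖z - z'‖ ^ 2) := by
      rw [hbdef]; field_simp; ring
    rw [e, Real.exp_add] at h
    calc p t z z' ≤ C0 * t ^ (-(N : ℝ) / 2) * (Real.exp (ω1 * t) *
            Real.exp (-b * ‖z - z'‖ ^ 2)) := h
      _ = c * Real.exp (-b * ‖z - z'‖ ^ 2) := by rw [hcdef]; ring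
  -- integrable Gaussians
  have hIg : Integrable (fun y : EuclideanSpace ℝ (Fin N) => Real.exp (-b * ‖y‖ ^ 2)) :=
    aux_integrable_rexp_neg_mul_sq_norm hb
  have hIg2 : Integrable (fun y : EuclideanSpace ℝ (Fin N) => Real.exp (-(b / 2) * ‖y‖ ^ 2)) :=
    aux_integrable_rexp_neg_mul_sq_norm hb2
  set I : ℝ := ∫ y : EuclideanSpace ℝ (Fin N), Real.exp (-b * ‖y‖ ^ 2) with hIdef
  set I2 : ℝ := ∫ y : EuclideanSpace ℝ (Fin N), Real.exp (-(b / 2) * ‖y‖ ^ 2) with hI2def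
  have hI0 : 0 ≤ I := integral_nonneg fun y => (Real.exp_pos _).le
  have hI20 : 0 ≤ I2 := integral_nonneg fun y => (Real.exp_pos _).le
  -- measurability and integrability
  have hmeas_p : ∀ z : EuclideanSpace ℝ (Fin N), Measurable fun z' => p t z z' :=
    fun z => hp_meas.comp (measurable_const.prodMk (measurable_const.prodMk measurable_id))
  have hintG : ∀ z : EuclideanSpace ℝ (Fin N),
      Integrable (fun z' : EuclideanSpace ℝ (Fin N) => Real.exp (-b * ‖z - z'‖ ^ 2)) :=
    fun z => hIg.comp_sub_left z
  have hintG2 : ∀ z : EuclideanSpace ℝ (Fin N),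
      Integrable (fun z' : EuclideanSpace ℝ (Fin N) => Real.exp (-(b / 2) * ‖z - z'‖ ^ 2)) :=
    fun z => hIg2.comp_sub_left z
  have hint_p : ∀ z : EuclideanSpace ℝ (Fin N), Integrable (fun z' => p t z z') := by
    intro z
    refine ((hintG z).const_mul c).mono' (hmeas_p z).aestronglyMeasurable
      (Filter.Eventually.of_forall fun z' => ?_)
    rw [Real.norm_eq_abs, abs_of_nonneg (hp_nonneg t z z')]
    exact hpG z z'
  have hint_pf : ∀ (z : EuclideanSpace ℝ (Fin N)) (f : EuclideanSpace ℝ (Fin N) → ℝ)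
      (hf : Measurable f) (K : ℝ) (hK : ∀ z', |f z'| ≤ K),
      Integrable (fun z' => p t z z' * f z') := by
    intro z f hf K hK
    refine (((hintG z).const_mul c).mul_const K).mono'
      ((hmeas_p z).mul hf).aestronglyMeasurable (Filter.Eventually.of_forall fun z' => ?_)
    rw [Real.norm_eq_abs, abs_mul, abs_of_nonneg (hp_nonneg t z z')]
    have h1 : 0 ≤ K := le_trans (abs_nonneg _) (hK z')
    exact mul_le_mul (hpG z z') (hK z') (abs_nonneg _)
      (by positivity)
  have hint_pv : ∀ z, Integrable (fun z' => p t z z' * v0 z') :=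
    fun z => hint_pf z v0 hv0m M hv0b
  have hint_pw : ∀ z, Integrable (fun z' => p t z z' * w0 z') :=
    fun z => hint_pf z w0 hw0m M hw0b
  have hint_pu : ∀ z, Integrable (fun z' => p t z z' * |v0 z' - w0 z'|) := by
    intro z
    refine hint_pf z (fun z' => |v0 z' - w0 z'|) (hv0m.sub hw0m).abs (2 * M) fun z' => ?_
    rw [abs_abs]
    calc |v0 z' - w0 z'| ≤ |v0 z'| + |w0 z'| := abs_sub _ _
      _ ≤ M + M := add_le_add (hv0b z') (hw0b z')
      _ = 2 * M := by ring
  -- ∫ p ≤ c * I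
  have hip_le : ∀ z : EuclideanSpace ℝ (Fin N), (∫ z', p t z z') ≤ c * I := by
    intro z
    calc (∫ z', p t z z') ≤ ∫ z', c * Real.exp (-b * ‖z - z'‖ ^ 2) :=
          integral_mono (hint_p z) ((hintG z).const_mul c) fun z' => hpG z z'
      _ = c * ∫ z', Real.exp (-b * ‖z - z'‖ ^ 2) := integral_const_mul c _
      _ = c * I := by
          rw [hIdef, integral_sub_left_eq_self (fun y => Real.exp (-b * ‖y‖ ^ 2)) volume z]
  -- choose δ and A
  set δ : ℝ := ε / 2 / (c * I + 1) with hδdef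
  have hδ : 0 < δ := by positivity
  obtain ⟨A, hA⟩ := hclose δ hδ
  -- choose R
  set L : ℝ := 2 * M * c * I2 with hLdef
  have hL0 : 0 ≤ L := by positivity
  have hto : Filter.Tendsto (fun R : ℝ => L * Real.exp (-(b / 2) * R ^ 2))
      Filter.atTop (nhds 0) := by
    have h1 : Filter.Tendsto (fun R : ℝ => -(b / 2) * R ^ 2) Filter.atTop Filter.atBot :=
      (tendsto_pow_atTop (two_ne_zero)).const_mul_atTop_of_neg (by linarith)
    have h2 := (Real.tendsto_exp_atBot.comp h1).const_mul L
    simpa using h2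
  obtain ⟨R, hRle, hR0⟩ :=
    ((hto.eventually (eventually_le_nhds (by linarith : (0 : ℝ) < ε / 2))).and
      (Filter.eventually_ge_atTop 0)).exists
  refine ⟨A + R, fun z hz => ?_⟩
  -- the set s
  set s : Set (EuclideanSpace ℝ (Fin N)) := {z' | A ≤ z' n1} with hsdef
  have hs : MeasurableSet s := by
    have hcoord : Measurable fun z' : EuclideanSpace ℝ (Fin N) => z' n1 :=
      (EuclideanSpace.proj (𝕜 := ℝ) n1).continuous.measurable
    exact measurableSet_le measurable_const hcoord
  have hzA : A ≤ z n1 := by linarith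
  set X : ℝ := z n1 - A with hXdef
  have hXR : R ≤ X := by rw [hXdef]; linarith
  have hX0 : 0 ≤ X := le_trans hR0 hXR
  -- first reduction
  have hstep1 : |(∫ z', p t z z' * v0 z') - ∫ z', p t z z' * w0 z'|
      ≤ ∫ z', p t z z' * |v0 z' - w0 z'| := by
    rw [← integral_sub (hint_pv z) (hint_pw z)]
    calc |∫ z', (p t z z' * v0 z' - p t z z' * w0 z')|
        ≤ ∫ z', |p t z z' * v0 z' - p t z z' * w0 z'| := by
          simpa [Real.norm_eq_abs] using
            norm_integral_le_integral_norm fun z' => p t z z' * v0 z' - p t z z' * w0 z'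
      _ = ∫ z', p t z z' * |v0 z' - w0 z'| := by
          congr 1; funext z'
          rw [← mul_sub, abs_mul, abs_of_nonneg (hp_nonneg t z z')]
  have hsplit : (∫ z', p t z z' * |v0 z' - w0 z'|)
      = (∫ z' in s, p t z z' * |v0 z' - w0 z'|) + ∫ z' in sᶜ, p t z z' * |v0 z' - w0 z'| :=
    (integral_add_compl hs (hint_pu z)).symm
  -- bound on s
  have hkey1 : (∫ z' in s, p t z z' * |v0 z' - w0 z'|) ≤ ε / 2 := by
    have hmono : (∫ z' in s, p t z z' * |v0 z' - w0 z'|) ≤ ∫ z' in s, p t z z' * δ := by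
      refine setIntegral_mono_on ((hint_pu z).integrableOn)
        (((hint_p z).mul_const δ).integrableOn) hs fun z' hz' => ?_
      exact mul_le_mul_of_nonneg_left (hA z' hz') (hp_nonneg t z z')
    have hmono2 : (∫ z' in s, p t z z' * δ) ≤ ∫ z', p t z z' * δ := by
      refine setIntegral_le_integral ((hint_p z).mul_const δ)
        (Filter.Eventually.of_forall fun z' => ?_)
      exact mul_nonneg (hp_nonneg t z z') hδ.le
    have heq : (∫ z', p t z z' * δ) = (∫ z', p t z z') * δ := integral_mul_const δ _
    have hfin : (∫ z', p t z z') * δ ≤ ε / 2 := by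
      have h1 : (∫ z', p t z z') * δ ≤ (c * I) * δ :=
        mul_le_mul_of_nonneg_right (hip_le z) hδ.le
      have h2 : (c * I) * δ ≤ (c * I + 1) * δ := by nlinarith
      have h3 : (c * I + 1) * δ = ε / 2 := by
        rw [hδdef]
        field_simp
      linarith
    linarith
  -- bound on sᶜ
  have hkey2 : (∫ z' in sᶜ, p t z z' * |v0 z' - w0 z'|) ≤ ε / 2 := by
    set K2 : ℝ := 2 * M * c * Real.exp (-(b / 2) * X ^ 2) with hK2def
    have hK20 : 0 ≤ K2 := by positivity
    have hg_int : Integrable (fun z' : EuclideanSpace ℝ (Fin N) =>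
        K2 * Real.exp (-(b / 2) * ‖z - z'‖ ^ 2)) := (hintG2 z).const_mul K2
    have hptw : ∀ z' ∈ sᶜ, p t z z' * |v0 z' - w0 z'|
        ≤ K2 * Real.exp (-(b / 2) * ‖z - z'‖ ^ 2) := by
      intro z' hz'
      have hz'1 : z' n1 < A := by
        simpa [hsdef, not_le] using hz'
      -- coordinate estimate
      have hcoord : X ^ 2 ≤ ‖z - z'‖ ^ 2 := by
        have h1 : X ≤ z n1 - z' n1 := by rw [hXdef]; linarith
        have h2 : (z - z') n1 = z n1 - z' n1 := by simp
        have h3 : (z n1 - z' n1) ^ 2 ≤ ‖z - z'‖ ^ 2 := by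
          have := aux_sq_apply_le_norm_sq (z - z') n1
          rwa [h2] at this
        have h4 : X ^ 2 ≤ (z n1 - z' n1) ^ 2 := by nlinarith
        linarith
      have hexp : Real.exp (-b * ‖z - z'‖ ^ 2)
          ≤ Real.exp (-(b / 2) * X ^ 2) * Real.exp (-(b / 2) * ‖z - z'‖ ^ 2) := by
        rw [← Real.exp_add]
        apply Real.exp_le_exp.2
        nlinarith [mul_le_mul_of_nonneg_left hcoord hb2.le]
      have hu : |v0 z' - w0 z'| ≤ 2 * M := by
        calc |v0 z' - w0 z'| ≤ |v0 z'| + |w0 z'| := abs_sub _ _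
          _ ≤ M + M := add_le_add (hv0b z') (hw0b z')
          _ = 2 * M := by ring
      calc p t z z' * |v0 z' - w0 z'|
          ≤ (c * Real.exp (-b * ‖z - z'‖ ^ 2)) * (2 * M) :=
            mul_le_mul (hpG z z') hu (abs_nonneg _) (by positivity)
        _ ≤ (c * (Real.exp (-(b / 2) * X ^ 2) * Real.exp (-(b / 2) * ‖z - z'‖ ^ 2))) * (2 * M) := by
            have := mul_le_mul_of_nonneg_left hexp hc.le
            nlinarith [Real.exp_pos (-(b / 2) * ‖z - z'‖ ^ 2), Real.exp_pos (-(b / 2) * X ^ 2)]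
        _ = K2 * Real.exp (-(b / 2) * ‖z - z'‖ ^ 2) := by rw [hK2def]; ring
    have h1 : (∫ z' in sᶜ, p t z z' * |v0 z' - w0 z'|)
        ≤ ∫ z' in sᶜ, K2 * Real.exp (-(b / 2) * ‖z - z'‖ ^ 2) :=
      setIntegral_mono_on ((hint_pu z).integrableOn) hg_int.integrableOn hs.compl hptw
    have h2 : (∫ z' in sᶜ, K2 * Real.exp (-(b / 2) * ‖z - z'‖ ^ 2))
        ≤ ∫ z', K2 * Real.exp (-(b / 2) * ‖z - z'‖ ^ 2) :=
      setIntegral_le_integral hg_int (Filter.Eventually.of_forall fun z' => by positivity)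
    have h3 : (∫ z', K2 * Real.exp (-(b / 2) * ‖z - z'‖ ^ 2)) = K2 * I2 := by
      rw [integral_const_mul, hI2def,
        integral_sub_left_eq_self (fun y => Real.exp (-(b / 2) * ‖y‖ ^ 2)) volume z]
    have h4 : K2 * I2 ≤ ε / 2 := by
      have hXe : Real.exp (-(b / 2) * X ^ 2) ≤ Real.exp (-(b / 2) * R ^ 2) := by
        apply Real.exp_le_exp.2
        nlinarith [mul_le_mul_of_nonneg_left (pow_le_pow_left₀ hR0 hXR 2) hb2.le]
      have : K2 * I2 ≤ L * Real.exp (-(b / 2) * R ^ 2) := by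
        rw [hK2def, hLdef]
        nlinarith [mul_le_mul_of_nonneg_right (mul_le_mul_of_nonneg_left hXe
          (by positivity : (0:ℝ) ≤ 2 * M * c)) hI20]
      linarith
    linarith
  linarith [hstep1, hsplit, hkey1, hkey2]
end

section
/- Let v₀ : ℝ → ℝ be bounded and uniformly continuous, and let v be its heat extension. Then the function t ↦ liminf_{x→+∞} v(t,x) is nondecreasing on [0,+∞) and the function t ↦ limsup_{x→+∞} v(t,x) is nonincreasing on [0,+∞). -/
open Filter MeasureTheory Set

namespace HeatMono


noncomputable def K (t x : ℝ) : ℝ :=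
  (Real.sqrt (4 * Real.pi * t))⁻¹ * Real.exp (-x ^ 2 / (4 * t))

lemma K_nonneg (t x : ℝ) : 0 ≤ K t x :=
  mul_nonneg (inv_nonneg.2 (Real.sqrt_nonneg _)) (Real.exp_nonneg _)

lemma K_cont (t : ℝ) : Continuous (K t) := by
  unfold K; fun_prop

lemma K_eq (t : ℝ) : K t = fun x => (Real.sqrt (4 * Real.pi * t))⁻¹ *
    Real.exp (-(4 * t)⁻¹ * x ^ 2) := by
  funext x
  unfold K
  rw [show -x ^ 2 / (4 * t) = -(4 * t)⁻¹ * x ^ 2 by ring]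

lemma integrable_K {t : ℝ} (ht : 0 < t) : Integrable (K t) := by
  rw [K_eq]
  exact (integrable_exp_neg_mul_sq (by positivity)).const_mul _

lemma integral_K {t : ℝ} (ht : 0 < t) : ∫ x, K t x = 1 := by
  have hπ := Real.pi_pos
  simp only [K_eq t]
  rw [integral_const_mul, integral_gaussian,
    show Real.pi / (4 * t)⁻¹ = 4 * Real.pi * t by field_simp]
  rw [inv_mul_cancel₀]
  exact (Real.sqrt_pos.2 (by positivity)).ne'

lemma K_conv {a b : ℝ} (ha : 0 < a) (hb : 0 < b) (x y : ℝ) :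
    ∫ z : ℝ, K a (x - z) * K b (z - y) = K (a + b) (x - y) := by
  have hπ := Real.pi_pos
  have hab : (0:ℝ) < a + b := by linarith
  set p : ℝ := (a + b) / (4 * a * b) with hp_def
  have hp : 0 < p := by positivity
  set m : ℝ := (b * x + a * y) / (a + b) with hm_def
  have key : ∀ z : ℝ, K a (x - z) * K b (z - y) =
      ((Real.sqrt (4 * Real.pi * a))⁻¹ * (Real.sqrt (4 * Real.pi * b))⁻¹ *
        Real.exp (-(x - y) ^ 2 / (4 * (a + b)))) * Real.exp (-p * (z - m) ^ 2) := by
    intro z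
    have hexp : -(x - z) ^ 2 / (4 * a) + -(z - y) ^ 2 / (4 * b)
        = -(x - y) ^ 2 / (4 * (a + b)) + -p * (z - m) ^ 2 := by
      rw [hp_def, hm_def]
      field_simp
      ring
    calc K a (x - z) * K b (z - y)
        = (Real.sqrt (4 * Real.pi * a))⁻¹ * (Real.sqrt (4 * Real.pi * b))⁻¹ *
            Real.exp (-(x - z) ^ 2 / (4 * a) + -(z - y) ^ 2 / (4 * b)) := by
          unfold K; rw [Real.exp_add]; ring
      _ = _ := by rw [hexp, Real.exp_add]; ring
  simp only [key]
  rw [integral_const_mul]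
  have hgauss : ∫ z : ℝ, Real.exp (-p * (z - m) ^ 2) = Real.sqrt (Real.pi / p) :=
    calc ∫ z : ℝ, Real.exp (-p * (z - m) ^ 2) = ∫ z : ℝ, Real.exp (-p * z ^ 2) :=
        integral_sub_right_eq_self (fun z => Real.exp (-p * z ^ 2)) m
      _ = Real.sqrt (Real.pi / p) := integral_gaussian p
  have hconst : (Real.sqrt (4 * Real.pi * a))⁻¹ * (Real.sqrt (4 * Real.pi * b))⁻¹ *
      Real.sqrt (Real.pi / p) = (Real.sqrt (4 * Real.pi * (a + b)))⁻¹ := by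
    rw [← Real.sqrt_inv (4 * Real.pi * a), ← Real.sqrt_inv (4 * Real.pi * b),
      ← Real.sqrt_inv (4 * Real.pi * (a + b)),
      ← Real.sqrt_mul (by positivity : (0:ℝ) ≤ (4 * Real.pi * a)⁻¹),
      ← Real.sqrt_mul (by positivity : (0:ℝ) ≤ (4 * Real.pi * a)⁻¹ * (4 * Real.pi * b)⁻¹)]
    congr 1
    rw [hp_def]
    field_simp
  rw [hgauss]
  unfold K
  rw [← hconst]
  ring




lemma heatExt_eq (v0 : ℝ → ℝ) {t : ℝ} (ht : 0 < t) (x : ℝ) :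
    heatExt v0 t x = ∫ y, K t (x - y) * v0 y := by
  unfold heatExt K
  rw [if_neg ht.ne', ← integral_const_mul]
  exact integral_congr_ae (ae_of_all _ fun y => by ring)

lemma integrable_conv {t : ℝ} (ht : 0 < t) {w : ℝ → ℝ}
    (hm : AEStronglyMeasurable w (volume : Measure ℝ))
    {M : ℝ} (hb : ∀ z, |w z| ≤ M) (x : ℝ) :
    Integrable (fun y => K t (x - y) * w y) := by
  have h1 : Integrable (fun y : ℝ => K t (x - y)) := (integrable_K ht).comp_sub_left x
  have h2 := Integrable.bdd_mul (c := M) h1 hm (ae_of_all _ fun z => by simpa [Real.norm_eq_abs] using hb z)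
  simpa [mul_comm] using h2

lemma abs_conv_le {t : ℝ} (ht : 0 < t) {w : ℝ → ℝ}
    (hm : AEStronglyMeasurable w (volume : Measure ℝ))
    {M : ℝ} (hb : ∀ z, |w z| ≤ M) (x : ℝ) :
    |∫ y, K t (x - y) * w y| ≤ M := by
  have hint := integrable_conv ht hm hb x
  have h1 : Integrable (fun y : ℝ => K t (x - y)) := (integrable_K ht).comp_sub_left x
  calc |∫ y, K t (x - y) * w y| ≤ ∫ y, |K t (x - y) * w y| := by
        simpa only [Real.norm_eq_abs] using norm_integral_le_integral_norm (fun y => K t (x - y) * w y)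
    _ ≤ ∫ y, K t (x - y) * M := by
        refine integral_mono hint.abs (h1.mul_const M) fun y => ?_
        rw [abs_mul, abs_of_nonneg (K_nonneg _ _)]
        exact mul_le_mul_of_nonneg_left (hb y) (K_nonneg _ _)
    _ = M := by
        rw [integral_mul_const, integral_sub_left_eq_self (K t) volume x, integral_K ht, one_mul]

lemma abs_heatExt_le (v0 : ℝ → ℝ) (hc : Continuous v0) {M : ℝ} (hb : ∀ z, |v0 z| ≤ M)
    {t : ℝ} (ht : 0 ≤ t) (x : ℝ) : |heatExt v0 t x| ≤ M := by
  rcases ht.lt_or_eq with h | h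
  · rw [heatExt_eq v0 h]; exact abs_conv_le h hc.aestronglyMeasurable hb x
  · rw [← h]; simpa [heatExt] using hb x

lemma aesm_heatExt (v0 : ℝ → ℝ) (hc : Continuous v0) (t : ℝ) :
    AEStronglyMeasurable (fun x => heatExt v0 t x) (volume : Measure ℝ) := by
  rcases eq_or_ne t 0 with h | h
  · subst h; simpa [heatExt] using hc.aestronglyMeasurable
  · have heq : (fun x => heatExt v0 t x)
        = fun x => (Real.sqrt (4 * Real.pi * t))⁻¹ *
            ∫ y : ℝ, Real.exp (-(x - y) ^ 2 / (4 * t)) * v0 y := by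
      funext x; simp [heatExt, h]
    rw [heq]
    refine AEStronglyMeasurable.const_mul ?_ _
    apply StronglyMeasurable.aestronglyMeasurable
    exact StronglyMeasurable.integral_prod_right'
      (f := fun p : ℝ × ℝ => Real.exp (-(p.1 - p.2) ^ 2 / (4 * t)) * v0 p.2)
      (Continuous.stronglyMeasurable (by fun_prop))

lemma heatExt_semigroup (v0 : ℝ → ℝ) (hc : Continuous v0) {M : ℝ} (hb : ∀ z, |v0 z| ≤ M)
    {s r : ℝ} (hs : 0 ≤ s) (hr : 0 < r) (x : ℝ) :
    heatExt v0 (s + r) x = ∫ z, K r (x - z) * heatExt v0 s z := by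
  rcases hs.lt_or_eq with h | h
  · -- 0 < s
    have hsr : 0 < s + r := by linarith
    set f : ℝ → ℝ → ℝ := fun z y => K r (x - z) * (K s (z - y) * v0 y) with hf_def
    have hFm : AEStronglyMeasurable (Function.uncurry f) ((volume : Measure ℝ).prod volume) := by
      apply Continuous.aestronglyMeasurable
      exact ((K_cont r).comp (continuous_const.sub continuous_fst)).mul
        (((K_cont s).comp (continuous_fst.sub continuous_snd)).mul (hc.comp continuous_snd))
    have hFz : ∀ z : ℝ, Integrable (fun y => f z y) := fun z =>
      (integrable_conv h hc.aestronglyMeasurable hb z).const_mul _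
    have hM0 : 0 ≤ M := le_trans (abs_nonneg _) (hb 0)
    have hFnorm : Integrable (fun z => ∫ y, ‖f z y‖) := by
      refine Integrable.mono' (((integrable_K hr).comp_sub_left x).const_mul M)
        (hFm.norm.integral_prod_right') (ae_of_all _ fun z => ?_)
      have h0 : 0 ≤ ∫ y, ‖f z y‖ := integral_nonneg fun y => norm_nonneg _
      rw [Real.norm_eq_abs, abs_of_nonneg h0]
      calc ∫ y, ‖f z y‖ = K r (x - z) * ∫ y, |K s (z - y) * v0 y| := by
            rw [← integral_const_mul]
            refine integral_congr_ae (ae_of_all _ fun y => ?_)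
            rw [hf_def]
            simp only [Real.norm_eq_abs, abs_mul, abs_of_nonneg (K_nonneg r _),
              abs_of_nonneg (K_nonneg s _)]
        _ ≤ K r (x - z) * M := by
            refine mul_le_mul_of_nonneg_left ?_ (K_nonneg r _)
            calc ∫ y, |K s (z - y) * v0 y| ≤ ∫ y, K s (z - y) * M := by
                  refine integral_mono (integrable_conv h hc.aestronglyMeasurable hb z).abs
                    (((integrable_K h).comp_sub_left z).mul_const M) fun y => ?_
                  rw [abs_mul, abs_of_nonneg (K_nonneg _ _)]
                  exact mul_le_mul_of_nonneg_left (hb y) (K_nonneg _ _)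
              _ = M := by
                  rw [integral_mul_const, integral_sub_left_eq_self (K s) volume z,
                    integral_K h, one_mul]
        _ = M * K r (x - z) := mul_comm _ _
    have hF : Integrable (Function.uncurry f) ((volume : Measure ℝ).prod volume) :=
      (integrable_prod_iff hFm).2 ⟨ae_of_all _ hFz, hFnorm⟩
    calc heatExt v0 (s + r) x = ∫ y, K (s + r) (x - y) * v0 y := heatExt_eq v0 hsr x
      _ = ∫ y, (∫ z, K r (x - z) * K s (z - y)) * v0 y := by
          refine integral_congr_ae (ae_of_all _ fun y => ?_)
          dsimp only
          rw [K_conv hr h x y, add_comm r s]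
      _ = ∫ y, ∫ z, f z y := by
          refine integral_congr_ae (ae_of_all _ fun y => ?_)
          dsimp only
          rw [← integral_mul_const]
          exact integral_congr_ae (ae_of_all _ fun z => by rw [hf_def]; ring)
      _ = ∫ z, ∫ y, f z y := (integral_integral_swap hF).symm
      _ = ∫ z, K r (x - z) * heatExt v0 s z := by
          refine integral_congr_ae (ae_of_all _ fun z => ?_)
          dsimp only
          rw [integral_const_mul, heatExt_eq v0 h z]
  · -- s = 0
    rw [← h, zero_add, heatExt_eq v0 hr x]
    refine integral_congr_ae (ae_of_all _ fun z => ?_)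
    simp [heatExt]




lemma le_liminf_conv {r : ℝ} (hr : 0 < r) {w : ℝ → ℝ}
    (hw : AEStronglyMeasurable w (volume : Measure ℝ))
    {M : ℝ} (hwb : ∀ z, |w z| ≤ M) :
    Filter.liminf w Filter.atTop ≤
      Filter.liminf (fun x => ∫ y, K r (x - y) * w y) Filter.atTop := by
  have hM0 : 0 ≤ M := le_trans (abs_nonneg _) (hwb 0)
  set L := Filter.liminf w Filter.atTop with hL
  set conv := fun x : ℝ => ∫ y, K r (x - y) * w y with hconv_def
  -- rewrite the convolution
  have hconv : ∀ x, conv x = ∫ u, K r u * w (x - u) := by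
    intro x
    rw [hconv_def]
    dsimp only
    rw [← integral_sub_left_eq_self (fun y => K r (x - y) * w y) volume x]
    refine integral_congr_ae (ae_of_all _ fun u => ?_)
    dsimp only
    rw [sub_sub_cancel]
  have hwmx : ∀ x : ℝ, AEStronglyMeasurable (fun u => w (x - u)) (volume : Measure ℝ) :=
    fun x => hw.comp_quasiMeasurePreserving
      (Measure.measurePreserving_sub_left volume x).quasiMeasurePreserving
  have hint : ∀ x : ℝ, Integrable (fun u => K r u * w (x - u)) := by
    intro x
    have h2 := Integrable.bdd_mul (integrable_K hr) (hwmx x)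
      (c := M) (ae_of_all _ fun z => by simpa [Real.norm_eq_abs] using hwb _)
    simpa [mul_comm] using h2
  -- boundedness facts
  have hwbelow : ∀ᶠ x in atTop, -M ≤ w x :=
    Eventually.of_forall fun x => (abs_le.1 (hwb x)).1
  have hwbdd : IsBoundedUnder (· ≥ ·) atTop w :=
    isBoundedUnder_of ⟨-M, fun x => (abs_le.1 (hwb x)).1⟩
  refine le_of_forall_pos_le_add fun ε hε => ?_
  rw [← sub_le_iff_le_add]
  set ε1 := ε / 2 with hε1_def
  have hε1 : 0 < ε1 := by positivity
  -- eventual lower bound for w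
  have hlt : L - ε1 < L := by linarith
  obtain ⟨R, hR⟩ := (Filter.eventually_atTop).1 (Filter.eventually_lt_of_lt_liminf hlt hwbdd)
  -- choose the truncation level
  set D : ℝ := M + |L| + ε1 with hD_def
  have hD0 : 0 ≤ D := by positivity
  set δ : ℝ := ε1 / (D + M + 1) with hδ_def
  have hδ : 0 < δ := by positivity
  have htend : Tendsto (fun n : ℕ => ∫ u in Icc (-(n:ℝ)) (n:ℝ), K r u) atTop
      (nhds (∫ u, K r u)) := by
    have hU : ⋃ n : ℕ, Icc (-(n:ℝ)) (n:ℝ) = univ := by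
      ext u
      simp only [mem_iUnion, mem_Icc, mem_univ, iff_true]
      refine ⟨⌈|u|⌉₊, ?_, ?_⟩
      · have := Nat.le_ceil |u|
        have h2 := neg_abs_le u
        linarith
      · have := Nat.le_ceil |u|
        have h2 := le_abs_self u
        linarith
    have := tendsto_setIntegral_of_monotone (f := K r) (μ := volume)
      (s := fun n : ℕ => Icc (-(n:ℝ)) (n:ℝ)) (fun n => measurableSet_Icc)
      (fun a b hab => Icc_subset_Icc (by simp [neg_le_neg, Nat.cast_le.2 hab])
        (Nat.cast_le.2 hab)) (by rw [hU]; exact (integrable_K hr).integrableOn)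
    rwa [hU, MeasureTheory.setIntegral_univ] at this
  rw [integral_K hr] at htend
  obtain ⟨N, hN⟩ := (htend.eventually (eventually_gt_nhds (by linarith : 1 - δ < 1))).exists
  set S : Set ℝ := Icc (-(N:ℝ)) (N:ℝ) with hS_def
  have hSmeas : MeasurableSet S := measurableSet_Icc
  have hIle : ∫ u in S, K r u ≤ 1 := by
    rw [← integral_K hr]
    exact setIntegral_le_integral (integrable_K hr) (ae_of_all _ fun u => K_nonneg r u)
  have htail : ∫ u in Sᶜ, K r u ≤ δ := by
    have hadd : (∫ u in S, K r u) + ∫ u in Sᶜ, K r u = 1 := by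
      rw [integral_add_compl hSmeas (integrable_K hr), integral_K hr]
    linarith
  -- the eventual bound on conv
  have hev : ∀ᶠ x in atTop, L - ε ≤ conv x := by
    filter_upwards [eventually_ge_atTop (R + N)] with x hx
    rw [hconv x]
    have hsplit : ∫ u, K r u * w (x - u)
        = (∫ u in S, K r u * w (x - u)) + ∫ u in Sᶜ, K r u * w (x - u) :=
      (integral_add_compl hSmeas (hint x)).symm
    have hbound1 : (L - ε1) * ∫ u in S, K r u ≤ ∫ u in S, K r u * w (x - u) := by
      rw [← integral_const_mul]
      refine setIntegral_mono_on (((integrable_K hr).const_mul _).integrableOn)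
        ((hint x).integrableOn) hSmeas fun u hu => ?_
      have hxu : R ≤ x - u := by
        rw [hS_def, mem_Icc] at hu
        linarith [hu.2]
      have := hR (x - u) hxu
      calc (L - ε1) * K r u = K r u * (L - ε1) := mul_comm _ _
        _ ≤ K r u * w (x - u) := mul_le_mul_of_nonneg_left this.le (K_nonneg r u)
    have hbound2 : (-M) * ∫ u in Sᶜ, K r u ≤ ∫ u in Sᶜ, K r u * w (x - u) := by
      rw [← integral_const_mul]
      refine setIntegral_mono_on (((integrable_K hr).const_mul _).integrableOn)
        ((hint x).integrableOn) hSmeas.compl fun u _ => ?_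
      calc (-M) * K r u = K r u * (-M) := mul_comm _ _
        _ ≤ K r u * w (x - u) :=
          mul_le_mul_of_nonneg_left (abs_le.1 (hwb (x - u))).1 (K_nonneg r u)
    have hIS : 1 - δ < ∫ u in S, K r u := hN
    have htail0 : 0 ≤ ∫ u in Sᶜ, K r u :=
      integral_nonneg fun u => K_nonneg r u
    have h1 : L - ε1 - D * δ ≤ (L - ε1) * ∫ u in S, K r u := by
      nlinarith [le_abs_self L, neg_abs_le L, abs_nonneg L]
    have h2 : -(M * δ) ≤ (-M) * ∫ u in Sᶜ, K r u := by nlinarith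
    have hδD : D * δ + M * δ ≤ ε1 := by
      have h3 : (D + M + 1) * δ = ε1 := by rw [hδ_def]; field_simp
      nlinarith
    rw [hsplit]
    have := add_le_add (le_trans h1 hbound1) (le_trans h2 hbound2)
    have hfin : L - ε1 - D * δ + -(M * δ) ≥ L - ε := by
      have : ε1 + ε1 = ε := by rw [hε1_def]; ring
      linarith
    linarith
  have hcobconv : IsCoboundedUnder (· ≥ ·) atTop conv :=
    IsBoundedUnder.isCoboundedUnder_ge ((isBoundedUnder_of
      ⟨M, fun x => le_of_abs_le (abs_conv_le hr hw hwb x)⟩ :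
        IsBoundedUnder (· ≤ ·) atTop conv))
  exact Filter.le_liminf_of_le hcobconv hev

lemma liminf_neg_eq (f : ℝ → ℝ) :
    Filter.liminf (fun x => -f x) Filter.atTop = -Filter.limsup f Filter.atTop := by
  rw [Filter.liminf_eq, Filter.limsup_eq, Real.sInf_def, neg_neg]
  congr 1
  ext a
  simp only [Set.mem_neg, Set.mem_setOf_eq]
  constructor <;> intro h <;> filter_upwards [h] with x hx <;> linarith

lemma heatExt_neg (v0 : ℝ → ℝ) (t x : ℝ) :
    heatExt (fun y => -v0 y) t x = -heatExt v0 t x := by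
  unfold heatExt
  split_ifs
  · rfl
  · rw [show (fun y : ℝ => Real.exp (-(x - y) ^ 2 / (4 * t)) * (fun y => -v0 y) y)
        = fun y : ℝ => -(Real.exp (-(x - y) ^ 2 / (4 * t)) * v0 y) from
          funext fun y => by ring, integral_neg]
    ring

lemma mono_aux (v0 : ℝ → ℝ) (hv0uc : UniformContinuous v0)
    (M : ℝ) (hv0b : ∀ x, |v0 x| ≤ M) :
    MonotoneOn (fun t => Filter.liminf (fun x => heatExt v0 t x) Filter.atTop)
      (Set.Ici (0 : ℝ)) := by
  intro s hs t ht hst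
  rcases eq_or_lt_of_le hst with h | h
  · rw [h]
  · have hc : Continuous v0 := hv0uc.continuous
    have hr : 0 < t - s := by linarith
    have hw := aesm_heatExt v0 hc s
    have hwb : ∀ z, |heatExt v0 s z| ≤ M := fun z => abs_heatExt_le v0 hc hv0b hs z
    have hrepr : (fun x => heatExt v0 t x)
        = fun x => ∫ z, K (t - s) (x - z) * heatExt v0 s z := by
      funext x
      have hsg := heatExt_semigroup v0 hc hv0b hs hr x
      rwa [show s + (t - s) = t by ring] at hsg
    dsimp only
    rw [hrepr]
    exact le_liminf_conv hr hw hwb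

end HeatMono

/-- monotonicity in time of the liminf and limsup at +∞ of the heat
extension of a bounded uniformly continuous datum. -/
theorem heat_liminf_monotone_limsup_antitone
    (v0 : ℝ → ℝ) (hv0uc : UniformContinuous v0)
    (M : ℝ) (hv0b : ∀ x, |v0 x| ≤ M) :
    MonotoneOn (fun t => Filter.liminf (fun x => heatExt v0 t x) Filter.atTop)
      (Set.Ici (0 : ℝ)) ∧
    AntitoneOn (fun t => Filter.limsup (fun x => heatExt v0 t x) Filter.atTop)
      (Set.Ici (0 : ℝ)) := by
  constructor
  · exact HeatMono.mono_aux v0 hv0uc M hv0b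
  · have hneg := HeatMono.mono_aux (fun y => -v0 y) hv0uc.neg M
      (fun x => by simpa [abs_neg] using hv0b x)
    intro s hs t ht hst
    have h := hneg hs ht hst
    dsimp only at h ⊢
    have hs' : ∀ u : ℝ, Filter.liminf (fun x => heatExt (fun y => -v0 y) u x) Filter.atTop
        = -Filter.limsup (fun x => heatExt v0 u x) Filter.atTop := by
      intro u
      rw [show (fun x => heatExt (fun y => -v0 y) u x)
          = fun x => -heatExt v0 u x from funext fun x => HeatMono.heatExt_neg v0 u x]
      exact HeatMono.liminf_neg_eq _
    rw [hs' s, hs' t] at h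
    linarith
end

section
/- Let 0 ≤ α < β < θ < 1, let (x_n) be an admissible sequence and u₀ the associated oscillating front-like initial condition, and let v be the heat extension of u₀. Then for every t ≥ 0, liminf_{x→+∞} v(t,x) = α and limsup_{x→+∞} v(t,x) = β; consequently α_min(u₀) = α and α_max(u₀) = β. -/
open Filter MeasureTheory Set

lemma osc_gauss_form {s : ℝ} (x : ℝ) :
    (fun y : ℝ => Real.exp (-(x - y)^2 / s)) = fun y : ℝ => Real.exp (-s⁻¹ * (x - y)^2) := by
  funext y; congr 1; ring

lemma osc_gauss_integral {s : ℝ} (hs : 0 < s) (x : ℝ) :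
    ∫ y : ℝ, Real.exp (-(x - y)^2 / s) = Real.sqrt (Real.pi * s) := by
  have h := integral_sub_left_eq_self (fun z : ℝ => Real.exp (-z^2 / s)) volume x
  calc ∫ y : ℝ, Real.exp (-(x - y)^2 / s) = ∫ y : ℝ, Real.exp (-y^2 / s) := h
    _ = ∫ y : ℝ, Real.exp (-s⁻¹ * y^2) := by congr 1; funext y; congr 1; ring
    _ = Real.sqrt (Real.pi / s⁻¹) := integral_gaussian s⁻¹
    _ = Real.sqrt (Real.pi * s) := by congr 1; field_simp

lemma osc_gauss_integrable {s : ℝ} (hs : 0 < s) (x : ℝ) :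
    Integrable (fun y : ℝ => Real.exp (-(x - y)^2 / s)) := by
  have h : (0:ℝ) < s⁻¹ := by positivity
  have h2 : Integrable (fun y : ℝ => Real.exp (-s⁻¹ * (y - x)^2)) :=
    (integrable_exp_neg_mul_sq h).comp_sub_right x
  refine h2.congr ?_
  filter_upwards with y
  congr 1; ring

lemma osc_sqrt_pos {t : ℝ} (ht : 0 < t) : 0 < Real.sqrt (4 * Real.pi * t) :=
  Real.sqrt_pos.2 (by have := Real.pi_pos; positivity)

lemma osc_sqrt_eq {t : ℝ} : Real.sqrt (Real.pi * (4 * t)) = Real.sqrt (4 * Real.pi * t) := by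
  congr 1; ring

lemma osc_kernel_integrable {t : ℝ} (ht : 0 < t) (x : ℝ) {u0 : ℝ → ℝ}
    (hc : Continuous u0) (hb : ∀ y, α ≤ u0 y ∧ u0 y ≤ 1) (hα : 0 ≤ α) :
    Integrable (fun y : ℝ => Real.exp (-(x - y)^2 / (4 * t)) * u0 y) := by
  have hg : Integrable (fun y : ℝ => Real.exp (-(x - y)^2 / (4 * t))) :=
    osc_gauss_integrable (by positivity) x
  have := hg.bdd_mul hc.aestronglyMeasurable
    (c := 1) (Filter.Eventually.of_forall fun y => by
      rw [Real.norm_eq_abs, abs_le]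
      exact ⟨by linarith [(hb y).1], (hb y).2⟩)
  exact this.congr (by filter_upwards with y; ring)

/-- Main upper comparison: if `u0 ≤ c + d·1_S` then
`heatExt u0 t x ≤ c + d * ((√(4πt))⁻¹ ∫_S K)`. -/
lemma osc_heat_le {t x c d α : ℝ} (ht : 0 < t) {u0 : ℝ → ℝ}
    (hc : Continuous u0) (hα : 0 ≤ α) (hb : ∀ y, α ≤ u0 y ∧ u0 y ≤ 1)
    {S : Set ℝ} (hS : MeasurableSet S)
    (hub : ∀ y, u0 y ≤ c + d * S.indicator (fun _ => (1:ℝ)) y) :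
    heatExt u0 t x ≤ c + d * ((Real.sqrt (4 * Real.pi * t))⁻¹ *
      ∫ y in S, Real.exp (-(x - y)^2 / (4 * t))) := by
  have h4t : (0:ℝ) < 4 * t := by positivity
  set K : ℝ → ℝ := fun y => Real.exp (-(x - y)^2 / (4 * t)) with hK
  have hKint : Integrable K := osc_gauss_integrable h4t x
  have hKnn : ∀ y, 0 ≤ K y := fun y => Real.exp_nonneg _
  have hsp := osc_sqrt_pos ht
  have hrhsint : Integrable (fun y => c * K y + d * S.indicator K y) :=
    (hKint.const_mul c).add ((hKint.indicator hS).const_mul d)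
  have hmono : ∫ y : ℝ, K y * u0 y ≤ ∫ y : ℝ, (c * K y + d * S.indicator K y) := by
    refine integral_mono (osc_kernel_integrable ht x hc hb hα) hrhsint ?_
    intro y
    have h1 : K y * u0 y ≤ K y * (c + d * S.indicator (fun _ => (1:ℝ)) y) :=
      mul_le_mul_of_nonneg_left (hub y) (hKnn y)
    refine h1.trans_eq ?_
    by_cases hy : y ∈ S <;> simp [indicator_of_mem, indicator_of_notMem, hy] <;> ring
  have hval : ∫ y : ℝ, (c * K y + d * S.indicator K y)
      = c * Real.sqrt (4 * Real.pi * t) + d * ∫ y in S, K y := by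
    rw [integral_add (hKint.const_mul c) ((hKint.indicator hS).const_mul d),
      integral_const_mul, integral_const_mul, integral_indicator hS, hK,
      osc_gauss_integral h4t x, osc_sqrt_eq]
  have : heatExt u0 t x = (Real.sqrt (4 * Real.pi * t))⁻¹ * ∫ y : ℝ, K y * u0 y := by
    rw [heatExt, if_neg ht.ne']
  rw [this]
  calc (Real.sqrt (4 * Real.pi * t))⁻¹ * ∫ y : ℝ, K y * u0 y
      ≤ (Real.sqrt (4 * Real.pi * t))⁻¹ * ∫ y : ℝ, (c * K y + d * S.indicator K y) :=
        mul_le_mul_of_nonneg_left hmono (inv_nonneg.2 hsp.le)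
    _ = c + d * ((Real.sqrt (4 * Real.pi * t))⁻¹ * ∫ y in S, K y) := by
        rw [hval]
        field_simp

lemma osc_heat_ge {t x c d α : ℝ} (ht : 0 < t) {u0 : ℝ → ℝ}
    (hc : Continuous u0) (hα : 0 ≤ α) (hb : ∀ y, α ≤ u0 y ∧ u0 y ≤ 1)
    {S : Set ℝ} (hS : MeasurableSet S)
    (hlb : ∀ y, c + d * S.indicator (fun _ => (1:ℝ)) y ≤ u0 y) :
    c + d * ((Real.sqrt (4 * Real.pi * t))⁻¹ *
      ∫ y in S, Real.exp (-(x - y)^2 / (4 * t))) ≤ heatExt u0 t x := by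
  have h4t : (0:ℝ) < 4 * t := by positivity
  set K : ℝ → ℝ := fun y => Real.exp (-(x - y)^2 / (4 * t)) with hK
  have hKint : Integrable K := osc_gauss_integrable h4t x
  have hKnn : ∀ y, 0 ≤ K y := fun y => Real.exp_nonneg _
  have hsp := osc_sqrt_pos ht
  have hrhsint : Integrable (fun y => c * K y + d * S.indicator K y) :=
    (hKint.const_mul c).add ((hKint.indicator hS).const_mul d)
  have hmono : ∫ y : ℝ, (c * K y + d * S.indicator K y) ≤ ∫ y : ℝ, K y * u0 y := by
    refine integral_mono hrhsint (osc_kernel_integrable ht x hc hb hα) ?_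
    intro y
    have h1 : K y * (c + d * S.indicator (fun _ => (1:ℝ)) y) ≤ K y * u0 y :=
      mul_le_mul_of_nonneg_left (hlb y) (hKnn y)
    refine Eq.trans_le ?_ h1
    by_cases hy : y ∈ S <;> simp [indicator_of_mem, indicator_of_notMem, hy] <;> ring
  have hval : ∫ y : ℝ, (c * K y + d * S.indicator K y)
      = c * Real.sqrt (4 * Real.pi * t) + d * ∫ y in S, K y := by
    rw [integral_add (hKint.const_mul c) ((hKint.indicator hS).const_mul d),
      integral_const_mul, integral_const_mul, integral_indicator hS, hK,
      osc_gauss_integral h4t x, osc_sqrt_eq]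
  have hgoal : heatExt u0 t x = (Real.sqrt (4 * Real.pi * t))⁻¹ * ∫ y : ℝ, K y * u0 y := by
    rw [heatExt, if_neg ht.ne']
  rw [hgoal]
  calc c + d * ((Real.sqrt (4 * Real.pi * t))⁻¹ * ∫ y in S, K y)
      = (Real.sqrt (4 * Real.pi * t))⁻¹ * ∫ y : ℝ, (c * K y + d * S.indicator K y) := by
        rw [hval]; field_simp
    _ ≤ (Real.sqrt (4 * Real.pi * t))⁻¹ * ∫ y : ℝ, K y * u0 y :=
        mul_le_mul_of_nonneg_left hmono (inv_nonneg.2 hsp.le)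

lemma osc_tail_Iio {t : ℝ} (ht : 0 < t) {x : ℝ} (hx : 2 ≤ x) :
    (Real.sqrt (4 * Real.pi * t))⁻¹ * ∫ y in Set.Iio 2, Real.exp (-(x - y)^2 / (4 * t))
      ≤ Real.sqrt 2 * Real.exp (-(x - 2)^2 / (8 * t)) := by
  have h4t : (0:ℝ) < 4 * t := by positivity
  have h8t : (0:ℝ) < 8 * t := by positivity
  have hsp := osc_sqrt_pos ht
  set C := Real.exp (-(x - 2)^2 / (8 * t)) with hC
  have hCpos : 0 < C := Real.exp_pos _
  have hg8 : Integrable (fun y : ℝ => Real.exp (-(x - y)^2 / (8 * t))) :=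
    osc_gauss_integrable h8t x
  have hstep : ∫ y in Set.Iio 2, Real.exp (-(x - y)^2 / (4 * t))
      ≤ C * Real.sqrt (Real.pi * (8 * t)) := by
    calc ∫ y in Set.Iio 2, Real.exp (-(x - y)^2 / (4 * t))
        ≤ ∫ y in Set.Iio 2, C * Real.exp (-(x - y)^2 / (8 * t)) := by
          refine setIntegral_mono_on ((osc_gauss_integrable h4t x).integrableOn)
            ((hg8.const_mul C).integrableOn) measurableSet_Iio ?_
          intro y hy
          rw [hC, ← Real.exp_add]
          refine Real.exp_le_exp.2 ?_
          have hxy : (x - 2)^2 ≤ (x - y)^2 := by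
            have h1 : (0:ℝ) ≤ x - 2 := by linarith
            have h2 : x - 2 ≤ x - y := by simp only [mem_Iio] at hy; linarith
            nlinarith
          rw [← add_div]
          rw [div_le_div_iff₀ h4t h8t]
          nlinarith
      _ ≤ ∫ y : ℝ, C * Real.exp (-(x - y)^2 / (8 * t)) := by
          refine setIntegral_le_integral (hg8.const_mul C) ?_
          filter_upwards with y
          positivity
      _ = C * Real.sqrt (Real.pi * (8 * t)) := by
          rw [integral_const_mul, osc_gauss_integral h8t x]
  have hsqrt : Real.sqrt (Real.pi * (8 * t)) = Real.sqrt 2 * Real.sqrt (4 * Real.pi * t) := by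
    rw [← Real.sqrt_mul (by norm_num : (0:ℝ) ≤ 2)]
    congr 1; ring
  calc (Real.sqrt (4 * Real.pi * t))⁻¹ * ∫ y in Set.Iio 2, Real.exp (-(x - y)^2 / (4 * t))
      ≤ (Real.sqrt (4 * Real.pi * t))⁻¹ * (C * Real.sqrt (Real.pi * (8 * t))) :=
        mul_le_mul_of_nonneg_left hstep (inv_nonneg.2 hsp.le)
    _ = Real.sqrt 2 * C := by rw [hsqrt]; field_simp

lemma osc_tail_tendsto {t : ℝ} (ht : 0 < t) :
    Tendsto (fun x : ℝ => Real.sqrt 2 * Real.exp (-(x - 2)^2 / (8 * t))) atTop (nhds 0) := by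
  have h1 : Tendsto (fun x : ℝ => x - 2) atTop atTop :=
    tendsto_atTop_add_const_right _ (-2) tendsto_id
  have h2 : Tendsto (fun z : ℝ => z ^ 2) atTop atTop := tendsto_pow_atTop (by norm_num)
  have h3 : Tendsto (fun x : ℝ => (x - 2)^2 / (8 * t)) atTop atTop :=
    (h2.comp h1).atTop_div_const (by positivity)
  have h4 : Tendsto (fun x : ℝ => -(x - 2)^2 / (8 * t)) atTop atBot := by
    simp only [neg_div]
    exact tendsto_neg_atTop_atBot.comp h3
  have h5 := Real.tendsto_exp_atBot.comp h4
  have := h5.const_mul (Real.sqrt 2)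
  simpa using this

lemma osc_center_integral {t : ℝ} (ht : 0 < t) (m L : ℝ) (hL : 0 ≤ L) :
    ∫ y in Set.Icc (m - L) (m + L), Real.exp (-(m - y)^2 / (4 * t))
      = ∫ z in (-L)..L, Real.exp (-z^2 / (4 * t)) := by
  rw [integral_Icc_eq_integral_Ioc,
    ← intervalIntegral.integral_of_le (by linarith : m - L ≤ m + L)]
  have h := intervalIntegral.integral_comp_sub_left (a := m - L) (b := m + L)
    (fun z : ℝ => Real.exp (-z^2 / (4 * t))) m
  simpa using h

lemma osc_G_tendsto {t : ℝ} (ht : 0 < t) {L : ℕ → ℝ} (hL : Tendsto L atTop atTop) :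
    Tendsto (fun n => (Real.sqrt (4 * Real.pi * t))⁻¹ *
      ∫ z in (-(L n))..(L n), Real.exp (-z^2 / (4 * t))) atTop (nhds 1) := by
  have h4t : (0:ℝ) < 4 * t := by positivity
  have hsp := osc_sqrt_pos ht
  have hint : Integrable (fun z : ℝ => Real.exp (-z^2 / (4 * t))) := by
    have := osc_gauss_integrable h4t 0
    refine this.congr ?_
    filter_upwards with y; congr 1 <;> ring_nf
  have hval : ∫ z : ℝ, Real.exp (-z^2 / (4 * t)) = Real.sqrt (4 * Real.pi * t) := by
    have := osc_gauss_integral h4t 0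
    rw [← osc_sqrt_eq, ← this]
    congr 1; funext y; congr 1; ring
  have h := intervalIntegral_tendsto_integral hint
    (tendsto_neg_atTop_atBot.comp hL) hL
  rw [hval] at h
  have := h.const_mul (Real.sqrt (4 * Real.pi * t))⁻¹
  simpa [inv_mul_cancel₀ hsp.ne'] using this

lemma osc_x_ge {x : ℕ → ℝ} (hx : IsAdmissibleSeq x) : ∀ n : ℕ, (1 + 3 * n : ℝ) ≤ x n := by
  intro n
  induction n with
  | zero => simp [hx.1]
  | succ n ih =>
      have := hx.2.1 n
      push_cast
      push_cast at ih
      linarith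

lemma osc_x_one_le {x : ℕ → ℝ} (hx : IsAdmissibleSeq x) (n : ℕ) : (1:ℝ) ≤ x n := by
  have := osc_x_ge hx n
  have h0 : (0:ℝ) ≤ (n:ℝ) := Nat.cast_nonneg n
  linarith

lemma osc_x_tendsto {x : ℕ → ℝ} (hx : IsAdmissibleSeq x) : Tendsto x atTop atTop := by
  refine tendsto_atTop_mono (osc_x_ge hx) ?_
  apply tendsto_atTop_add_const_left
  exact (tendsto_natCast_atTop_atTop (R := ℝ)).const_mul_atTop (by norm_num)

lemma osc_gap_tendsto {x : ℕ → ℝ} (hx : IsAdmissibleSeq x) :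
    Tendsto (fun n => x (n + 1) - x n) atTop atTop := by
  have hr := hx.2.2
  refine tendsto_atTop_mono' atTop ?_ (tendsto_atTop_add_const_right _ (-1) hr)
  filter_upwards [hr.eventually_ge_atTop 1] with n hn
  have hx1 : (1:ℝ) ≤ x n := osc_x_one_le hx n
  have hxpos : (0:ℝ) < x n := by linarith
  have hdiv : x (n + 1) / x n * x n = x (n + 1) := div_mul_cancel₀ _ hxpos.ne'
  nlinarith [mul_nonneg (by linarith : (0:ℝ) ≤ x (n+1)/x n - 1) (by linarith : (0:ℝ) ≤ x n - 1)]

lemma osc_le_beta {α β : ℝ} {x : ℕ → ℝ} {u0 : ℝ → ℝ} (hαβ : α < β) (hβ1 : β < 1)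
    (hx : IsAdmissibleSeq x) (hu0 : IsOscInit α β x u0) :
    ∀ y : ℝ, 2 ≤ y → u0 y ≤ β := by
  have hx0 := hx.1
  have hxgap := hx.2.1
  have step1 : ∀ n : ℕ, ∀ y : ℝ, x (2 * n) + 1 ≤ y → y ≤ x (2 * n + 2) + 1 → u0 y ≤ β := by
    intro n y hy1 hy2
    obtain ⟨h1, h2, h3, h4⟩ := hu0.2.2.2.2 n
    have g1 := hxgap (2 * n)
    have g2 := hxgap (2 * n + 1)
    rcases le_or_gt y (x (2 * n + 1) - 1) with h | h
    · rw [h1 y ⟨hy1, h⟩]; linarith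
    rcases le_or_gt y (x (2 * n + 1) + 1) with h' | h'
    · rw [h2 y ⟨by linarith, h'⟩]; nlinarith
    rcases le_or_gt y (x (2 * n + 2) - 1) with h'' | h''
    · rw [h3 y ⟨by linarith, h''⟩]
    · rw [h4 y ⟨by linarith, hy2⟩]; nlinarith
  have step2 : ∀ n : ℕ, ∀ y : ℝ, 2 ≤ y → y ≤ x (2 * n + 2) + 1 → u0 y ≤ β := by
    intro n
    induction n with
    | zero =>
        intro y hy1 hy2
        refine step1 0 y ?_ (by simpa using hy2)
        have e : x (2 * 0) = 1 := by norm_num [hx0]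
        rw [e]; linarith
    | succ n ih =>
        intro y hy1 hy2
        rcases le_or_gt y (x (2 * n + 2) + 1) with h | h
        · exact ih y hy1 h
        · refine step1 (n + 1) y ?_ ?_
          · have e1 : 2 * (n + 1) = 2 * n + 2 := by ring
            rw [e1]; linarith
          · exact hy2
  intro y hy
  obtain ⟨n, hn⟩ := exists_nat_ge y
  refine step2 n y hy ?_
  have h := osc_x_ge hx (2 * n + 2)
  push_cast at h
  linarith

/-- for the oscillating datum, the heat extension has liminf α and
limsup β at +∞ at every time, hence α_min(u₀) = α and α_max(u₀) = β. -/
theorem oscillating_heat_liminf_limsup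
    (θ α β : ℝ) (hα : 0 ≤ α) (hαβ : α < β) (hβ : β < θ) (hθ : θ < 1)
    (x : ℕ → ℝ) (hx : IsAdmissibleSeq x)
    (u0 : ℝ → ℝ) (hu0 : IsOscInit α β x u0) :
    (∀ t, 0 ≤ t →
      Filter.liminf (fun y => heatExt u0 t y) Filter.atTop = α ∧
      Filter.limsup (fun y => heatExt u0 t y) Filter.atTop = β) ∧
    Filter.Tendsto (fun t => Filter.liminf (fun y => heatExt u0 t y) Filter.atTop)
      Filter.atTop (nhds α) ∧
    Filter.Tendsto (fun t => Filter.limsup (fun y => heatExt u0 t y) Filter.atTop)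
      Filter.atTop (nhds β) := by
  have hβ1 : β < 1 := hβ.trans hθ
  have hcont := hu0.1
  have hrange := hu0.2.1
  have hpieces := hu0.2.2.2.2
  have hbeta_bd : ∀ y : ℝ, 2 ≤ y → u0 y ≤ β := osc_le_beta hαβ hβ1 hx hu0
  -- midpoints and half-lengths of plateaus
  set A : ℕ → ℝ := fun n => (x (2*n) + x (2*n+1)) / 2 with hA
  set B : ℕ → ℝ := fun n => (x (2*n+1) + x (2*n+2)) / 2 with hB
  set LA : ℕ → ℝ := fun n => (x (2*n+1) - x (2*n)) / 2 - 1 with hLA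
  set LB : ℕ → ℝ := fun n => (x (2*n+2) - x (2*n+1)) / 2 - 1 with hLB
  have hgapA : ∀ n : ℕ, 3 ≤ x (2*n+1) - x (2*n) := fun n => hx.2.1 (2*n)
  have hgapB : ∀ n : ℕ, 3 ≤ x (2*n+2) - x (2*n+1) := fun n => hx.2.1 (2*n+1)
  have hLA0 : ∀ n, 0 ≤ LA n := fun n => by have := hgapA n; simp only [hLA]; linarith
  have hLB0 : ∀ n, 0 ≤ LB n := fun n => by have := hgapB n; simp only [hLB]; linarith
  have hSA : ∀ n, Set.Icc (A n - LA n) (A n + LA n)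
      = Set.Icc (x (2*n) + 1) (x (2*n+1) - 1) := by
    intro n; simp only [hA, hLA]; congr 1 <;> ring
  have hSB : ∀ n, Set.Icc (B n - LB n) (B n + LB n)
      = Set.Icc (x (2*n+1) + 1) (x (2*n+2) - 1) := by
    intro n; simp only [hB, hLB]; congr 1 <;> ring
  have huA : ∀ n, ∀ y ∈ Set.Icc (A n - LA n) (A n + LA n), u0 y = α := by
    intro n y hy; rw [hSA n] at hy; exact (hpieces n).1 y hy
  have huB : ∀ n, ∀ y ∈ Set.Icc (B n - LB n) (B n + LB n), u0 y = β := by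
    intro n y hy; rw [hSB n] at hy; exact (hpieces n).2.2.1 y hy
  have hmemA : ∀ n, A n ∈ Set.Icc (A n - LA n) (A n + LA n) := by
    intro n; constructor <;> [skip; skip] <;> have := hLA0 n <;> linarith
  have hmemB : ∀ n, B n ∈ Set.Icc (B n - LB n) (B n + LB n) := by
    intro n; constructor <;> [skip; skip] <;> have := hLB0 n <;> linarith
  -- limits of the sequences
  have h2n : Tendsto (fun n : ℕ => 2*n) atTop atTop :=
    tendsto_atTop_mono (fun n => show n ≤ 2*n by omega) tendsto_id
  have h2n1 : Tendsto (fun n : ℕ => 2*n+1) atTop atTop :=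
    tendsto_atTop_mono (fun n => show n ≤ 2*n+1 by omega) tendsto_id
  have hgapT := osc_gap_tendsto hx
  have hLAT : Tendsto LA atTop atTop := by
    have h1 : Tendsto (fun n : ℕ => x (2*n+1) - x (2*n)) atTop atTop := hgapT.comp h2n
    have h2 := h1.atTop_div_const (by norm_num : (0:ℝ) < 2)
    have h3 := tendsto_atTop_add_const_right atTop (-1) h2
    refine h3.congr fun n => ?_
    simp only [hLA]; ring
  have hLBT : Tendsto LB atTop atTop := by
    have h1 : Tendsto (fun n : ℕ => x (2*n+2) - x (2*n+1)) atTop atTop := hgapT.comp h2n1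
    have h2 := h1.atTop_div_const (by norm_num : (0:ℝ) < 2)
    have h3 := tendsto_atTop_add_const_right atTop (-1) h2
    refine h3.congr fun n => ?_
    simp only [hLB]; ring
  have hAT : Tendsto A atTop atTop := by
    refine tendsto_atTop_mono (fun n => ?_) ((osc_x_tendsto hx).comp h2n)
    have := hgapA n
    simp only [Function.comp, hA]
    linarith
  have hBT : Tendsto B atTop atTop := by
    refine tendsto_atTop_mono (fun n => ?_) ((osc_x_tendsto hx).comp h2n1)
    have := hgapB n
    simp only [Function.comp, hB]
    linarith
  have hB2 : ∀ n, 2 ≤ B n := by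
    intro n
    have h1 := osc_x_ge hx (2*n+1)
    have h2 := osc_x_ge hx (2*n+2)
    have h3 : (0:ℝ) ≤ (n:ℝ) := Nat.cast_nonneg n
    push_cast at h1 h2
    simp only [hB]
    linarith
  -- main per-time claim
  have key : ∀ t, 0 ≤ t →
      Filter.liminf (fun y => heatExt u0 t y) Filter.atTop = α ∧
      Filter.limsup (fun y => heatExt u0 t y) Filter.atTop = β := by
    intro t ht0
    have hfb : ∀ y, α ≤ heatExt u0 t y ∧ heatExt u0 t y ≤ 1 := by
      rcases eq_or_lt_of_le ht0 with h | h
      · intro y; rw [heatExt, if_pos h.symm]; exact hrange y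
      · intro y
        constructor
        · have := osc_heat_ge (x := y) (c := α) (d := 0) h hcont hα hrange
            (S := (∅ : Set ℝ)) MeasurableSet.empty
            (fun z => by simpa using (hrange z).1)
          simpa using this
        · have := osc_heat_le (x := y) (c := 1) (d := 0) h hcont hα hrange
            (S := (∅ : Set ℝ)) MeasurableSet.empty
            (fun z => by simpa using (hrange z).2)
          simpa using this
    have hbdd_le : IsBoundedUnder (· ≤ ·) atTop (fun y => heatExt u0 t y) :=
      isBoundedUnder_of ⟨1, fun y => (hfb y).2⟩
    have hbdd_ge : IsBoundedUnder (· ≥ ·) atTop (fun y => heatExt u0 t y) :=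
      isBoundedUnder_of ⟨α, fun y => (hfb y).1⟩
    have hcob_le : IsCoboundedUnder (· ≤ ·) atTop (fun y => heatExt u0 t y) :=
      hbdd_ge.isCoboundedUnder_le
    have hcob_ge : IsCoboundedUnder (· ≥ ·) atTop (fun y => heatExt u0 t y) :=
      hbdd_le.isCoboundedUnder_ge
    -- convergence along A to α
    have hAtend : Tendsto (fun n => heatExt u0 t (A n)) atTop (nhds α) := by
      rcases eq_or_lt_of_le ht0 with h | h
      · have he : ∀ n, heatExt u0 t (A n) = α := fun n => by
          rw [heatExt, if_pos h.symm]; exact huA n (A n) (hmemA n)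
        exact tendsto_const_nhds.congr fun n => (he n).symm
      · have hub : ∀ n, heatExt u0 t (A n) ≤ 1 + (α - 1) *
            ((Real.sqrt (4 * Real.pi * t))⁻¹ *
              ∫ z in (-(LA n))..(LA n), Real.exp (-z^2 / (4 * t))) := by
          intro n
          have hind : ∀ y, u0 y ≤ 1 + (α - 1) *
              (Set.Icc (A n - LA n) (A n + LA n)).indicator (fun _ => (1:ℝ)) y := by
            intro y
            by_cases hy : y ∈ Set.Icc (A n - LA n) (A n + LA n)
            · rw [indicator_of_mem hy, huA n y hy]; ring_nf; exact le_rfl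
            · rw [indicator_of_notMem hy]; simpa using (hrange y).2
          have h1 := osc_heat_le (x := A n) (c := 1) (d := α - 1) h hcont hα hrange
            measurableSet_Icc hind
          rwa [osc_center_integral h (A n) (LA n) (hLA0 n)] at h1
        have hG := osc_G_tendsto h hLAT
        have hupper : Tendsto (fun n => 1 + (α - 1) *
            ((Real.sqrt (4 * Real.pi * t))⁻¹ *
              ∫ z in (-(LA n))..(LA n), Real.exp (-z^2 / (4 * t)))) atTop (nhds α) := by
          have h2 := (hG.const_mul (α - 1)).const_add 1
          have h3 : 1 + (α - 1) * 1 = α := by ring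
          rwa [h3] at h2
        exact tendsto_of_tendsto_of_tendsto_of_le_of_le tendsto_const_nhds hupper
          (fun n => (hfb (A n)).1) hub
    -- convergence along B to β
    have hBtend : Tendsto (fun n => heatExt u0 t (B n)) atTop (nhds β) := by
      rcases eq_or_lt_of_le ht0 with h | h
      · have he : ∀ n, heatExt u0 t (B n) = β := fun n => by
          rw [heatExt, if_pos h.symm]; exact huB n (B n) (hmemB n)
        exact tendsto_const_nhds.congr fun n => (he n).symm
      · have hlow : ∀ n, α + (β - α) *
            ((Real.sqrt (4 * Real.pi * t))⁻¹ *
              ∫ z in (-(LB n))..(LB n), Real.exp (-z^2 / (4 * t)))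
            ≤ heatExt u0 t (B n) := by
          intro n
          have hind : ∀ y, α + (β - α) *
              (Set.Icc (B n - LB n) (B n + LB n)).indicator (fun _ => (1:ℝ)) y ≤ u0 y := by
            intro y
            by_cases hy : y ∈ Set.Icc (B n - LB n) (B n + LB n)
            · rw [indicator_of_mem hy, huB n y hy]; ring_nf; exact le_rfl
            · rw [indicator_of_notMem hy]; simpa using (hrange y).1
          have h1 := osc_heat_ge (x := B n) (c := α) (d := β - α) h hcont hα hrange
            measurableSet_Icc hind
          rwa [osc_center_integral h (B n) (LB n) (hLB0 n)] at h1
        have hup : ∀ n, heatExt u0 t (B n) ≤ β + (1 - β) *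
            (Real.sqrt 2 * Real.exp (-(B n - 2)^2 / (8 * t))) := by
          intro n
          have hind : ∀ y, u0 y ≤ β + (1 - β) *
              (Set.Iio (2:ℝ)).indicator (fun _ => (1:ℝ)) y := by
            intro y
            by_cases hy : y ∈ Set.Iio (2:ℝ)
            · rw [indicator_of_mem hy]
              have := (hrange y).2; linarith
            · rw [indicator_of_notMem hy]
              simp only [mem_Iio, not_lt] at hy
              have := hbeta_bd y hy; linarith
          have h1 := osc_heat_le (x := B n) (c := β) (d := 1 - β) h hcont hα hrange
            measurableSet_Iio hind
          have h2 := osc_tail_Iio h (hB2 n)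
          have h3 : (0:ℝ) ≤ 1 - β := by linarith
          nlinarith [mul_le_mul_of_nonneg_left h2 h3]
        have hlowT : Tendsto (fun n => α + (β - α) *
            ((Real.sqrt (4 * Real.pi * t))⁻¹ *
              ∫ z in (-(LB n))..(LB n), Real.exp (-z^2 / (4 * t)))) atTop (nhds β) := by
          have h2 := ((osc_G_tendsto h hLBT).const_mul (β - α)).const_add α
          have h3 : α + (β - α) * 1 = β := by ring
          rwa [h3] at h2
        have hupT : Tendsto (fun n => β + (1 - β) *
            (Real.sqrt 2 * Real.exp (-(B n - 2)^2 / (8 * t)))) atTop (nhds β) := by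
          have h2 := (((osc_tail_tendsto h).comp hBT).const_mul (1 - β)).const_add β
          have h3 : β + (1 - β) * 0 = β := by ring
          rwa [h3] at h2
        exact tendsto_of_tendsto_of_tendsto_of_le_of_le hlowT hupT hlow hup
    -- limsup ≤ β
    have hlimsup_le : Filter.limsup (fun y => heatExt u0 t y) Filter.atTop ≤ β := by
      rcases eq_or_lt_of_le ht0 with h | h
      · refine limsup_le_of_le hcob_le ?_
        filter_upwards [eventually_ge_atTop (2:ℝ)] with y hy
        rw [heatExt, if_pos h.symm]
        exact hbeta_bd y hy
      · have hev : ∀ᶠ y in atTop, heatExt u0 t y ≤ β + (1 - β) *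
            (Real.sqrt 2 * Real.exp (-(y - 2)^2 / (8 * t))) := by
          filter_upwards [eventually_ge_atTop (2:ℝ)] with y hy
          have hind : ∀ z, u0 z ≤ β + (1 - β) *
              (Set.Iio (2:ℝ)).indicator (fun _ => (1:ℝ)) z := by
            intro z
            by_cases hz : z ∈ Set.Iio (2:ℝ)
            · rw [indicator_of_mem hz]
              have := (hrange z).2; linarith
            · rw [indicator_of_notMem hz]
              simp only [mem_Iio, not_lt] at hz
              have := hbeta_bd z hz; linarith
          have h1 := osc_heat_le (x := y) (c := β) (d := 1 - β) h hcont hα hrange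
            measurableSet_Iio hind
          have h2 := osc_tail_Iio h hy
          have h3 : (0:ℝ) ≤ 1 - β := by linarith
          nlinarith [mul_le_mul_of_nonneg_left h2 h3]
        have hrhsT : Tendsto (fun y : ℝ => β + (1 - β) *
            (Real.sqrt 2 * Real.exp (-(y - 2)^2 / (8 * t)))) atTop (nhds β) := by
          have h2 := ((osc_tail_tendsto h).const_mul (1 - β)).const_add β
          have h3 : β + (1 - β) * 0 = β := by ring
          rwa [h3] at h2
        calc Filter.limsup (fun y => heatExt u0 t y) Filter.atTop
            ≤ Filter.limsup (fun y : ℝ => β + (1 - β) *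
                (Real.sqrt 2 * Real.exp (-(y - 2)^2 / (8 * t)))) Filter.atTop :=
              limsup_le_limsup hev hcob_le hrhsT.isBoundedUnder_le
          _ = β := hrhsT.limsup_eq
    -- assemble
    constructor
    · refine le_antisymm ?_ (le_liminf_of_le hcob_ge
        (Eventually.of_forall fun y => (hfb y).1))
      have hcobA : IsCoboundedUnder (· ≥ ·) (map A atTop) (fun y => heatExt u0 t y) := by
        rw [IsCoboundedUnder, map_map]
        exact (isBoundedUnder_of ⟨1, fun n => (hfb (A n)).2⟩ :
          IsBoundedUnder (· ≤ ·) atTop fun n => heatExt u0 t (A n)).isCoboundedUnder_ge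
      have h1 : Filter.liminf (fun y => heatExt u0 t y) Filter.atTop
          ≤ Filter.liminf (fun y => heatExt u0 t y) (map A atTop) :=
        liminf_le_liminf_of_le hAT hbdd_ge hcobA
      have h2 : Filter.liminf (fun y => heatExt u0 t y) (map A atTop) = α := by
        rw [← liminf_comp]
        exact hAtend.liminf_eq
      linarith
    · refine le_antisymm hlimsup_le ?_
      have hcobB : IsCoboundedUnder (· ≤ ·) (map B atTop) (fun y => heatExt u0 t y) := by
        rw [IsCoboundedUnder, map_map]
        exact (isBoundedUnder_of ⟨α, fun n => (hfb (B n)).1⟩ :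
          IsBoundedUnder (· ≥ ·) atTop fun n => heatExt u0 t (B n)).isCoboundedUnder_le
      have h1 : Filter.limsup (fun y => heatExt u0 t y) (map B atTop)
          ≤ Filter.limsup (fun y => heatExt u0 t y) Filter.atTop :=
        limsup_le_limsup_of_le hBT hcobB hbdd_le
      have h2 : Filter.limsup (fun y => heatExt u0 t y) (map B atTop) = β := by
        rw [← limsup_comp]
        exact hBtend.limsup_eq
      linarith
  refine ⟨key, ?_, ?_⟩
  · refine tendsto_const_nhds.congr' ?_
    filter_upwards [eventually_ge_atTop (0:ℝ)] with t ht
    exact ((key t ht).1).symm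
  · refine tendsto_const_nhds.congr' ?_
    filter_upwards [eventually_ge_atTop (0:ℝ)] with t ht
    exact ((key t ht).2).symm
end

section
/- Let f be a combustion-type nonlinearity with ignition temperature θ ∈ (0,1), let 0 ≤ α < β < θ, let (x_n) be an admissible sequence and u₀ the associated oscillating front-like initial condition, and let u be a classical solution of u_t = u_{xx} + f(u) with initial condition u₀. Then for every t ≥ 0: α ≤ u(t,x) ≤ 1 for all x; inf_{x∈ℝ} u(t,x) = liminf_{x→+∞} u(t,x) = α; limsup_{x→+∞} u(t,x) = β; and sup_{x∈ℝ} u(t,x) = 1, with u(t,x) → 1 as x → -∞. -/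
open Filter MeasureTheory Set Topology

section Helpers

lemma slope_nonpos {g : ℝ → ℝ} {g' t : ℝ} (ht : 0 < t)
    (hg : HasDerivAt g g' t) (h : ∀ s, 0 ≤ s → s < t → g t ≤ g s) : g' ≤ 0 := by
  have hs := hasDerivAt_iff_tendsto_slope.1 hg
  have hs' : Tendsto (slope g t) (𝓝[<] t) (𝓝 g') :=
    hs.mono_left (nhdsWithin_mono _ (fun y hy => ne_of_lt hy))
  refine le_of_tendsto hs' ?_
  filter_upwards [Ioo_mem_nhdsLT_of_mem (Set.mem_Ioc.2 ⟨ht, le_refl t⟩)] with s hs2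
  have h1 : g t ≤ g s := h s hs2.1.le hs2.2
  rw [slope_def_field]
  exact div_nonpos_of_nonneg_of_nonpos (by linarith) (by linarith [hs2.2])

lemma second_nonneg {h h' : ℝ → ℝ} {h'' x : ℝ}
    (hd : ∀ y, HasDerivAt h (h' y) y)
    (hd' : HasDerivAt h' h'' x)
    (hmin : ∀ y, h x ≤ h y) : 0 ≤ h'' := by
  by_contra hneg
  push_neg at hneg
  have hloc : IsLocalMin h x := Filter.Eventually.of_forall hmin
  have hzero : h' x = 0 := hloc.hasDerivAt_eq_zero (hd x)
  have hs := hasDerivAt_iff_tendsto_slope.1 hd'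
  have hs' : Tendsto (slope h' x) (𝓝[>] x) (𝓝 h'') :=
    hs.mono_left (nhdsWithin_mono _ (fun y hy => ne_of_gt hy))
  have hev : ∀ᶠ y in 𝓝[>] x, slope h' x y < 0 :=
    hs'.eventually (Filter.Tendsto.eventually_lt_const hneg tendsto_id |>.mono (fun y hy => hy))
  have hev' : ∀ᶠ y in 𝓝[>] x, h' y < 0 := by
    filter_upwards [hev, self_mem_nhdsWithin] with y hy hy'
    rw [slope_def_field, hzero, sub_zero] at hy
    have hyx : 0 < y - x := sub_pos.2 hy'
    by_contra hc
    push_neg at hc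
    exact absurd hy (not_lt.2 (div_nonneg hc hyx.le))
  obtain ⟨u, hu, hsub⟩ := mem_nhdsGT_iff_exists_Ioo_subset.1 hev'
  set z := (x + u) / 2 with hz
  have hxu : x < u := hu
  have hxz : x < z := by rw [hz]; linarith
  have hzu : z < u := by rw [hz]; linarith
  have hanti : StrictAntiOn h (Icc x z) := by
    refine strictAntiOn_of_deriv_neg (convex_Icc x z)
      (fun y _ => (hd y).differentiableAt.continuousAt.continuousWithinAt) ?_
    intro y hy
    rw [interior_Icc] at hy
    rw [(hd y).deriv]
    exact hsub ⟨hy.1, lt_trans hy.2 hzu⟩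
  have := hanti (Set.left_mem_Icc.2 hxz.le) (Set.right_mem_Icc.2 hxz.le) hxz
  exact absurd (hmin z) (not_le.2 this)

set_option maxHeartbeats 1000000 in
lemma max_principle (L : ℝ) (hL : 0 ≤ L) (W : ℝ → ℝ → ℝ) (M : ℝ)
    (hcont : ContinuousOn (fun p : ℝ × ℝ => W p.1 p.2) (Set.Ici 0 ×ˢ Set.univ))
    (hbd : ∀ t x, 0 ≤ t → -M ≤ W t x)
    (h0 : ∀ x, 0 ≤ W 0 x)
    (hdiff : ∀ t, 0 < t → ∃ Wx : ℝ → ℝ,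
      (∀ y, HasDerivAt (fun z => W t z) (Wx y) y) ∧
      ∀ x, ∃ Wt Wxx, HasDerivAt (fun s => W s x) Wt t ∧ HasDerivAt Wx Wxx x ∧
        -L * |W t x| ≤ Wt - Wxx) :
    ∀ t x, 0 ≤ t → 0 ≤ W t x := by
  intro t₀ x₀ ht₀
  by_contra hWneg
  push_neg at hWneg
  have ht₀pos : 0 < t₀ := by
    rcases eq_or_lt_of_le ht₀ with h | h
    · exact absurd (h0 x₀) (by rw [← h] at hWneg; exact not_le.2 hWneg)
    · exact h
  have hkL : (0:ℝ) ≤ L + 1 := by linarith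
  obtain ⟨ε, hεpos, hv0⟩ : ∃ ε : ℝ, 0 < ε ∧
      Real.exp (-((L+1) * t₀)) * W t₀ x₀ + ε * (1 + x₀ ^ 2 + 2 * t₀) < 0 := by
    have hZ0 : Real.exp (-((L+1) * t₀)) * W t₀ x₀ < 0 :=
      mul_neg_of_pos_of_neg (Real.exp_pos _) hWneg
    refine ⟨-(Real.exp (-((L+1) * t₀)) * W t₀ x₀) / (2 * (1 + x₀ ^ 2 + 2 * t₀)), ?_, ?_⟩
    · apply div_pos (by linarith); nlinarith
    · have hDpos : (0:ℝ) < 1 + x₀ ^ 2 + 2 * t₀ := by positivity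
      have h6 : -(Real.exp (-((L+1) * t₀)) * W t₀ x₀) / (2 * (1 + x₀ ^ 2 + 2 * t₀)) *
          (1 + x₀ ^ 2 + 2 * t₀) = -(Real.exp (-((L+1) * t₀)) * W t₀ x₀) / 2 := by
        field_simp
      rw [h6]; linarith
  set Z : ℝ → ℝ → ℝ := fun t x => Real.exp (-((L+1) * t)) * W t x with hZdef
  set v : ℝ → ℝ → ℝ := fun t x => Z t x + ε * (1 + x ^ 2 + 2 * t) with hvdef
  have hv0' : v t₀ x₀ < 0 := hv0
  have hZbd : ∀ t x, 0 ≤ t → -(max M 0) ≤ Z t x := by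
    intro t x ht
    rcases le_or_gt 0 (W t x) with h | h
    · have h1 : 0 ≤ Z t x := mul_nonneg (Real.exp_pos _).le h
      linarith [le_max_right M 0]
    · have he : Real.exp (-((L+1) * t)) ≤ 1 := Real.exp_le_one_iff.2 (by nlinarith)
      have h1 : 1 * W t x ≤ Real.exp (-((L+1) * t)) * W t x :=
        mul_le_mul_of_nonpos_right he h.le
      have h2 := hbd t x ht
      have h3 : -(max M 0) ≤ -M := neg_le_neg (le_max_left M 0)
      simp only [one_mul] at h1
      exact le_trans h3 (le_trans h2 h1)
  set M' : ℝ := max M 0 with hM'def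
  have hM'0 : 0 ≤ M' := le_max_right M 0
  set R : ℝ := max |x₀| (Real.sqrt (M' / ε) + 1) with hRdef
  have hR0 : 0 ≤ R := le_trans (abs_nonneg x₀) (le_max_left _ _)
  have hRx₀ : |x₀| ≤ R := le_max_left _ _
  have hRbig : M' + ε ≤ ε * R ^ 2 := by
    have h1 : Real.sqrt (M' / ε) + 1 ≤ R := le_max_right _ _
    have h2 : Real.sqrt (M' / ε) ^ 2 = M' / ε := Real.sq_sqrt (by positivity)
    have h5 : ε * (M' / ε) = M' := by field_simp
    have h3 : (Real.sqrt (M' / ε) + 1) ^ 2 ≤ R ^ 2 := by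
      nlinarith [Real.sqrt_nonneg (M' / ε)]
    have h4 : ε * (Real.sqrt (M' / ε) + 1) ^ 2 ≤ ε * R ^ 2 :=
      mul_le_mul_of_nonneg_left h3 hεpos.le
    have h6 : (Real.sqrt (M' / ε) + 1) ^ 2 = M' / ε + 2 * Real.sqrt (M' / ε) + 1 := by
      rw [add_sq, h2]; ring
    have h7 : ε * (M' / ε + 2 * Real.sqrt (M' / ε) + 1)
        = M' + 2 * ε * Real.sqrt (M' / ε) + ε := by
      rw [mul_add, mul_add, h5]; ring
    have h8 : 0 ≤ 2 * ε * Real.sqrt (M' / ε) :=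
      mul_nonneg (by linarith) (Real.sqrt_nonneg _)
    rw [h6, h7] at h4
    linarith
  have hout : ∀ t y, 0 ≤ t → R < |y| → 0 < v t y := by
    intro t y ht hy
    have h1 : -M' ≤ Z t y := hZbd t y ht
    have h2 : R ^ 2 ≤ y ^ 2 := by
      calc R ^ 2 ≤ |y| ^ 2 := by nlinarith [abs_nonneg y]
        _ = y ^ 2 := sq_abs y
    have : v t y = Z t y + ε * (1 + y ^ 2 + 2 * t) := rfl
    rw [this]
    nlinarith
  have hvcont : ContinuousOn (fun p : ℝ × ℝ => v p.1 p.2) (Set.Ici 0 ×ˢ Set.univ) := by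
    apply ContinuousOn.add
    · exact ContinuousOn.mul
        (((continuous_const.mul continuous_fst).neg.rexp).continuousOn) hcont
    · apply Continuous.continuousOn
      exact continuous_const.mul
        ((continuous_const.add ((continuous_snd.pow 2))).add
          (continuous_const.mul continuous_fst))
  -- the compact region
  have hKcomp : IsCompact (Set.Icc (0:ℝ) t₀ ×ˢ Set.Icc (-R) R) :=
    IsCompact.prod isCompact_Icc isCompact_Icc
  have hKsub : (Set.Icc (0:ℝ) t₀ ×ˢ Set.Icc (-R) R) ⊆ Set.Ici 0 ×ˢ Set.univ :=
    fun p hp => ⟨hp.1.1, trivial⟩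
  set A : Set (ℝ × ℝ) :=
    (Set.Icc (0:ℝ) t₀ ×ˢ Set.Icc (-R) R) ∩ {p | v p.1 p.2 ≤ 0} with hAdef
  have hx₀mem : x₀ ∈ Set.Icc (-R) R :=
    ⟨(neg_le_neg hRx₀).trans (neg_abs_le x₀), (le_abs_self x₀).trans hRx₀⟩
  have hAne : (t₀, x₀) ∈ A := ⟨⟨⟨ht₀, le_refl _⟩, hx₀mem⟩, hv0'.le⟩
  have hAclosed : IsClosed A := by
    have : A = (Set.Icc (0:ℝ) t₀ ×ˢ Set.Icc (-R) R) ∩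
        ((fun p : ℝ × ℝ => v p.1 p.2) ⁻¹' Set.Iic 0) := rfl
    rw [this]
    exact ContinuousOn.preimage_isClosed_of_isClosed (hvcont.mono hKsub)
      (hKcomp.isClosed) isClosed_Iic
  have hAcomp : IsCompact A := hKcomp.of_isClosed_subset hAclosed Set.inter_subset_left
  obtain ⟨p, hpA, hpmin⟩ := hAcomp.exists_isMinOn ⟨_, hAne⟩
    (continuous_fst.continuousOn)
  have hpmin' : ∀ q ∈ A, p.1 ≤ q.1 := fun q hq => hpmin hq
  have htstar_pos : 0 < p.1 := by
    rcases eq_or_lt_of_le hpA.1.1.1 with h | h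
    · exfalso
      have hv00 : v p.1 p.2 ≤ 0 := hpA.2
      have : v p.1 p.2 = Real.exp (-((L+1) * p.1)) * W p.1 p.2 + ε * (1 + p.2 ^ 2 + 2 * p.1) := rfl
      rw [this, ← h] at hv00
      simp only [neg_zero, mul_zero, Real.exp_zero, one_mul] at hv00
      nlinarith [h0 p.2, sq_nonneg p.2]
    · exact h
  -- spatial minimizer at time p.1
  have hslice : ContinuousOn (fun y => v p.1 y) (Set.Icc (-R) R) := by
    have hmap : Continuous (fun y : ℝ => (p.1, y)) := by fun_prop
    have := hvcont.comp hmap.continuousOn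
      (fun y (_ : y ∈ Set.Icc (-R) R) => show (p.1, y) ∈ Set.Ici (0:ℝ) ×ˢ Set.univ from
        ⟨hpA.1.1.1, trivial⟩)
    exact this
  obtain ⟨xs, hxsmem, hxsmin⟩ := isCompact_Icc.exists_isMinOn
    ⟨p.2, hpA.1.2⟩ hslice
  have hxsle : v p.1 xs ≤ 0 := le_trans (hxsmin hpA.1.2) hpA.2
  have hglobalmin : ∀ y, v p.1 xs ≤ v p.1 y := by
    intro y
    rcases le_or_gt |y| R with h | h
    · exact hxsmin ⟨neg_le_of_abs_le h, le_trans (le_abs_self y) h⟩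
    · exact le_trans hxsle (hout p.1 y hpA.1.1.1 h).le
  have hpast : ∀ s, 0 ≤ s → s < p.1 → v p.1 xs ≤ v s xs := by
    intro s hs hsp
    by_contra hc
    push_neg at hc
    rcases le_or_gt (v s xs) 0 with h | h
    · have : (s, xs) ∈ A := ⟨⟨⟨hs, le_trans hsp.le hpA.1.1.2⟩, hxsmem⟩, h⟩
      exact absurd (hpmin' _ this) (not_le.2 hsp)
    · exact absurd (le_trans hxsle h.le) (not_le.2 hc)
  -- derivative information at (p.1, xs)
  obtain ⟨Wx, hWxall, hrest⟩ := hdiff p.1 htstar_pos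
  obtain ⟨Wt, Wxx, hWt, hWxx, hineq⟩ := hrest xs
  have hE : HasDerivAt (fun s : ℝ => Real.exp (-((L+1) * s)))
      (Real.exp (-((L+1) * p.1)) * (-(L+1))) p.1 := by
    have h1 : HasDerivAt (fun s : ℝ => -((L+1) * s)) (-(L+1)) p.1 := by
      exact (((hasDerivAt_id p.1).const_mul (L+1)).neg).congr_deriv (by ring)
    simpa using h1.exp
  have hg : HasDerivAt (fun s => v s xs)
      ((Real.exp (-((L+1) * p.1)) * (-(L+1)) * W p.1 xs
        + Real.exp (-((L+1) * p.1)) * Wt) + ε * 2) p.1 := by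
    show HasDerivAt (fun s => Real.exp (-((L+1) * s)) * W s xs + ε * (1 + xs ^ 2 + 2 * s)) _ p.1
    have h2 : HasDerivAt (fun s : ℝ => ε * (1 + xs ^ 2 + 2 * s)) (ε * 2) p.1 := by
      have h3 : HasDerivAt (fun s : ℝ => 1 + xs ^ 2 + 2 * s) 2 p.1 := by
        simpa using (((hasDerivAt_id p.1).const_mul 2).const_add (1 + xs ^ 2))
      simpa using h3.const_mul ε
    exact (hE.mul hWt).add h2
  have hgle := slope_nonpos htstar_pos hg (fun s hs hsp => hpast s hs hsp)
  -- spatial second derivative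
  have hd : ∀ y, HasDerivAt (fun z => v p.1 z)
      (Real.exp (-((L+1) * p.1)) * Wx y + ε * (2 * y)) y := by
    intro y
    show HasDerivAt
      (fun z => Real.exp (-((L+1) * p.1)) * W p.1 z + ε * (1 + z ^ 2 + 2 * p.1)) _ y
    have h2 : HasDerivAt (fun z : ℝ => ε * (1 + z ^ 2 + 2 * p.1)) (ε * (2 * y)) y := by
      have h3 : HasDerivAt (fun z : ℝ => 1 + z ^ 2 + 2 * p.1) (2 * y) y := by
        simpa using (((hasDerivAt_pow 2 y).const_add 1).add_const (2 * p.1))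
      simpa using h3.const_mul ε
    exact ((hWxall y).const_mul _).add h2
  have hd' : HasDerivAt (fun y => Real.exp (-((L+1) * p.1)) * Wx y + ε * (2 * y))
      (Real.exp (-((L+1) * p.1)) * Wxx + ε * 2) xs := by
    have h2 : HasDerivAt (fun y : ℝ => ε * (2 * y)) (ε * 2) xs := by
      simpa using ((hasDerivAt_id xs).const_mul 2).const_mul ε
    exact (hWxx.const_mul _).add h2
  have hsecond := second_nonneg hd hd' hglobalmin
  -- combine
  set e := Real.exp (-((L+1) * p.1)) with hedef
  have hepos : 0 < e := Real.exp_pos _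
  set W' := W p.1 xs with hW'def
  have hvxs : e * W' + ε * (1 + xs ^ 2 + 2 * p.1) ≤ 0 := hxsle
  have hquad : 0 < ε * (1 + xs ^ 2 + 2 * p.1) := by nlinarith [sq_nonneg xs, htstar_pos]
  have heW' : e * W' < 0 := by linarith
  have hW'neg : W' < 0 := by
    by_contra hc
    push_neg at hc
    exact absurd heW' (not_lt.2 (mul_nonneg hepos.le hc))
  have hg'1 : e * Wt + ε * 2 ≤ e * ((L+1) * W') := by
    have hr : e * (-(L+1)) * W' = -(e * ((L+1) * W')) := by ring
    rw [hr] at hgle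
    linarith
  have hkey : e * (Wt - Wxx) ≤ e * ((L+1) * W') := by
    have := sub_le_sub hg'1 hsecond
    calc e * (Wt - Wxx) = (e * Wt + ε * 2) - (e * Wxx + ε * 2) := by ring
      _ ≤ e * ((L+1) * W') - 0 := sub_le_sub hg'1 hsecond
      _ = e * ((L+1) * W') := by ring
  have hfinal : Wt - Wxx ≤ (L+1) * W' := (mul_le_mul_iff_right₀ hepos).1 hkey
  have habs : |W'| = -W' := abs_of_neg hW'neg
  rw [habs] at hineq
  nlinarith [hineq, hfinal, hW'neg]


noncomputable def bterm (c A B C : ℝ) : ℝ → ℝ → ℝ :=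
  fun t z => c * Real.exp (A * t + B * z + C)

lemma bterm_t {c A B C : ℝ} (t z : ℝ) :
    HasDerivAt (fun s => bterm c A B C s z) (A * bterm c A B C t z) t := by
  unfold bterm
  have h : HasDerivAt (fun s : ℝ => A * s + B * z + C) A t := by
    have := ((hasDerivAt_id t).const_mul A).add_const (B * z + C)
    simpa [add_assoc] using this
  have h2 := (h.exp).const_mul c
  exact h2.congr_deriv (by ring)

lemma bterm_z {c A B C : ℝ} (t z : ℝ) :
    HasDerivAt (fun y => bterm c A B C t y) (B * bterm c A B C t z) z := by
  unfold bterm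
  have h : HasDerivAt (fun y : ℝ => A * t + B * y + C) B z := by
    have h0 : HasDerivAt (fun y : ℝ => B * y) B z := by
      simpa using (hasDerivAt_id z).const_mul B
    have h1 := (h0.const_add (A * t)).add_const C
    exact h1
  have h2 := (h.exp).const_mul c
  exact h2.congr_deriv (by ring)

lemma bterm_zz {c A B C : ℝ} (t z : ℝ) :
    HasDerivAt (fun y => B * bterm c A B C t y) (B * (B * bterm c A B C t z)) z :=
  (bterm_z t z).const_mul B

lemma bterm_cont {c A B C : ℝ} :
    Continuous (fun p : ℝ × ℝ => bterm c A B C p.1 p.2) := by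
  unfold bterm
  exact continuous_const.mul
    (((continuous_const.mul continuous_fst).add
      (continuous_const.mul continuous_snd)).add continuous_const).rexp

lemma bterm_nonneg {c A B C : ℝ} (hc : 0 ≤ c) (t z : ℝ) : 0 ≤ bterm c A B C t z :=
  mul_nonneg hc (Real.exp_pos _).le

lemma exp_small {c C ε : ℝ} (hC : 0 < C) (hε : 0 < ε) :
    ∀ r, c - Real.log (ε / C) ≤ r → C * Real.exp (c - r) ≤ ε := by
  intro r hr
  have h2 : Real.exp (c - r) ≤ ε / C := by
    rw [← Real.exp_log (div_pos hε hC)]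
    exact Real.exp_le_exp.2 (by linarith)
  calc C * Real.exp (c - r) ≤ C * (ε / C) := mul_le_mul_of_nonneg_left h2 hC.le
    _ = ε := by field_simp

lemma fest {f : ℝ → ℝ} {L c E w : ℝ}
    (hlip : ∀ a b, |f a - f b| ≤ L * |a - b|)
    (hfc : f c = 0) (hc0 : 0 ≤ c) (hc1 : c ≤ 1)
    (hE : 0 ≤ E) (hw0 : 0 ≤ w) (hw1 : w ≤ 1) :
    f w ≤ L * E + L * |w - (c + E)| := by
  have hL : 0 ≤ L := by
    have := hlip 0 1
    simp at this
    nlinarith [abs_nonneg (f 0 - f 1)]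
  set m : ℝ := min (c + E) 1 with hm
  have hmc : c ≤ m := le_min (by linarith) hc1
  have hm1 : m ≤ 1 := min_le_right _ _
  have hmE : m - c ≤ E := by
    have : m ≤ c + E := min_le_left _ _
    linarith
  have h1 : f m ≤ L * E := by
    have h2 := hlip m c
    rw [hfc] at h2
    have h3 : |f m - 0| = |f m| := by rw [sub_zero]
    have h4 : |m - c| = m - c := abs_of_nonneg (by linarith)
    rw [h3, h4] at h2
    calc f m ≤ |f m| := le_abs_self _
      _ ≤ L * (m - c) := h2
      _ ≤ L * E := mul_le_mul_of_nonneg_left hmE hL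
  have h5 : f w ≤ f m + L * |w - m| := by
    have h6 := hlip w m
    have h7 : f w - f m ≤ |f w - f m| := le_abs_self _
    linarith
  have h8 : |w - m| ≤ |w - (c + E)| := by
    rcases le_or_gt (c + E) 1 with h | h
    · have : m = c + E := min_eq_left h
      rw [this]
    · have hm1' : m = 1 := min_eq_right h.le
      rw [hm1']
      rw [abs_of_nonpos (by linarith), abs_of_nonpos (by linarith)]
      linarith
  have h9 : L * |w - m| ≤ L * |w - (c + E)| := mul_le_mul_of_nonneg_left h8 hL
  linarith

lemma f_nonneg {f : ℝ → ℝ} {θ : ℝ}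
    (h2 : ∀ s, s ≤ θ → f s = 0) (h3 : ∀ s, 1 ≤ s → f s = 0)
    (h4 : ∀ s, θ < s → s < 1 → 0 < f s) : ∀ s, 0 ≤ f s := by
  intro s
  rcases le_or_gt s θ with h | h
  · rw [h2 s h]
  · rcases le_or_gt 1 s with h' | h'
    · rw [h3 s h']
    · exact (h4 s h h').le

lemma f_lipschitz {f : ℝ → ℝ} {θ : ℝ} (hθ : θ ∈ Set.Ioo (0:ℝ) 1)
    (h2 : ∀ s, s ≤ θ → f s = 0) (h3 : ∀ s, 1 ≤ s → f s = 0)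
    (h5 : ContDiffOn ℝ 1 f (Set.Icc 0 1)) :
    ∃ L : ℝ, 0 ≤ L ∧ ∀ a b, |f a - f b| ≤ L * |a - b| := by
  have hconv : Convex ℝ (Set.Icc (0:ℝ) 1) := convex_Icc 0 1
  have hdiff : DifferentiableOn ℝ f (Set.Icc (0:ℝ) 1) :=
    h5.differentiableOn (by norm_num)
  have hud : UniqueDiffOn ℝ (Set.Icc (0:ℝ) 1) := uniqueDiffOn_Icc (by norm_num)
  have hcd : ContinuousOn (derivWithin f (Set.Icc (0:ℝ) 1)) (Set.Icc 0 1) :=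
    h5.continuousOn_derivWithin hud (le_refl 1)
  obtain ⟨C, hC⟩ := isCompact_Icc.exists_bound_of_continuousOn hcd
  set K : NNReal := ⟨max C 0, le_max_right _ _⟩ with hK
  have hlipOn : LipschitzOnWith K f (Set.Icc 0 1) := by
    apply hconv.lipschitzOnWith_of_nnnorm_derivWithin_le hdiff
    intro x hx
    have := hC x hx
    rw [← NNReal.coe_le_coe]
    simp only [coe_nnnorm, hK]
    exact le_trans this (le_max_left _ _)
  refine ⟨(K : ℝ), K.coe_nonneg, ?_⟩
  -- clamp
  have hclamp_mem : ∀ y : ℝ, max 0 (min 1 y) ∈ Set.Icc (0:ℝ) 1 :=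
    fun y => ⟨le_max_left _ _, max_le (by norm_num) (min_le_left _ _)⟩
  have hfclamp : ∀ y : ℝ, f y = f (max 0 (min 1 y)) := by
    intro y
    rcases le_or_gt y 0 with h | h
    · have hy1 : min 1 y = y := min_eq_right (by linarith)
      have hy2 : max 0 (min 1 y) = 0 := by rw [hy1]; exact max_eq_left h
      rw [hy2, h2 y (le_trans h hθ.1.le), h2 0 hθ.1.le]
    · rcases le_or_gt 1 y with h' | h'
      · have hy1 : min 1 y = 1 := min_eq_left h'
        have hy2 : max 0 (min 1 y) = 1 := by rw [hy1]; norm_num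
        rw [hy2, h3 y h', h3 1 (le_refl 1)]
      · have hy1 : min 1 y = y := min_eq_right h'.le
        have hy2 : max 0 (min 1 y) = y := by rw [hy1]; exact max_eq_right h.le
        rw [hy2]
  have hclamp_lip : ∀ a b : ℝ, |max 0 (min 1 a) - max 0 (min 1 b)| ≤ |a - b| := by
    intro a b
    calc |max 0 (min 1 a) - max 0 (min 1 b)|
        = |max (min 1 a) 0 - max (min 1 b) 0| := by rw [max_comm 0, max_comm 0]
      _ ≤ |min 1 a - min 1 b| := abs_max_sub_max_le_abs _ _ _
      _ ≤ max |(1:ℝ) - 1| |a - b| := abs_min_sub_min_le_max 1 a 1 b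
      _ = |a - b| := by simp
  intro a b
  rw [hfclamp a, hfclamp b]
  have := hlipOn.dist_le_mul _ (hclamp_mem a) _ (hclamp_mem b)
  rw [Real.dist_eq, Real.dist_eq] at this
  exact le_trans this (mul_le_mul_of_nonneg_left (hclamp_lip a b) K.coe_nonneg)

lemma xseq_lb {x : ℕ → ℝ} (hx : IsAdmissibleSeq x) : ∀ n : ℕ, 1 + 3 * (n : ℝ) ≤ x n := by
  intro n
  induction n with
  | zero => simp [hx.1]
  | succ k ih =>
    have := hx.2.1 k
    push_cast
    linarith

lemma xseq_mono {x : ℕ → ℝ} (hx : IsAdmissibleSeq x) : ∀ n, x n + 3 ≤ x (n+1) :=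
  fun n => by linarith [hx.2.1 n]

lemma u0_le_beta {α β : ℝ} {x : ℕ → ℝ} {u0 : ℝ → ℝ}
    (hαβ : α < β) (hx : IsAdmissibleSeq x) (hosc : IsOscInit α β x u0) :
    ∀ y, 2 ≤ y → u0 y ≤ β := by
  intro y hy
  obtain ⟨_, _, _, _, hcl⟩ := hosc
  have hex : ∃ n : ℕ, y < x n + 1 := by
    obtain ⟨n, hn⟩ := exists_nat_ge y
    exact ⟨n, by linarith [xseq_lb hx n, Nat.cast_nonneg (α := ℝ) n]⟩
  set N := Nat.find hex with hN
  have hNlt : y < x N + 1 := Nat.find_spec hex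
  have hNpos : N ≠ 0 := by
    intro h
    rw [h, hx.1] at hNlt
    linarith
  obtain ⟨m, hm⟩ : ∃ m, N = m + 1 := ⟨N - 1, (Nat.succ_pred_eq_of_ne_zero hNpos).symm⟩
  have hmle : x m + 1 ≤ y := by
    have := Nat.find_min hex (by omega : m < N)
    linarith [not_lt.1 this]
  rw [hm] at hNlt
  rcases le_or_gt y (x (m+1) - 1) with hcase | hcase
  · -- plateau piece
    rcases Nat.even_or_odd m with ⟨r, hr⟩ | ⟨r, hr⟩
    · have hidx : m = 2 * r := by omega
      have := (hcl r).1 y ⟨by rw [← hidx]; exact hmle, by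
        have : 2 * r + 1 = m + 1 := by omega
        rw [this]; exact hcase⟩
      linarith
    · have hidx : m = 2 * r + 1 := by omega
      have h1 : 2 * r + 2 = m + 1 := by omega
      have := (hcl r).2.2.1 y ⟨by rw [← hidx]; exact hmle, by rw [h1]; exact hcase⟩
      linarith
  · -- ramp piece around x (m+1)
    have hyIcc : x (m+1) - 1 ≤ y ∧ y ≤ x (m+1) + 1 := ⟨hcase.le, hNlt.le⟩
    rcases Nat.even_or_odd m with ⟨r, hr⟩ | ⟨r, hr⟩
    · have hidx : m + 1 = 2 * r + 1 := by omega
      rw [hidx] at hyIcc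
      have hval := (hcl r).2.1 y ⟨hyIcc.1, hyIcc.2⟩
      rw [hval]
      nlinarith [hyIcc.1, hyIcc.2]
    · have hidx : m + 1 = 2 * r + 2 := by omega
      rw [hidx] at hyIcc
      have hval := (hcl r).2.2.2 y ⟨hyIcc.1, hyIcc.2⟩
      rw [hval]
      nlinarith [hyIcc.1, hyIcc.2]

lemma gap_tendsto {x : ℕ → ℝ} (hx : IsAdmissibleSeq x) :
    Tendsto (fun n => x (n+1) - x n) atTop atTop := by
  have hpos : ∀ n, (1:ℝ) ≤ x n := fun n => by
    have h1 := xseq_lb hx n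
    have h2 : (0:ℝ) ≤ (n:ℝ) := Nat.cast_nonneg n
    linarith
  have hratio := hx.2.2
  have hshift : Tendsto (fun n => x (n+1) / x n - 1) atTop atTop :=
    tendsto_atTop_add_const_right _ (-1) hratio
  apply tendsto_atTop_mono _ hshift
  intro n
  have h1 : (1:ℝ) ≤ x n := hpos n
  have h0 : (0:ℝ) < x n := by linarith
  have hr1 : 1 ≤ x (n+1) / x n := by
    rw [le_div_iff₀ h0]
    have := hx.2.1 n
    linarith
  have key : x (n+1) / x n - 1 = (x (n+1) - x n) / x n := by field_simp
  rw [key]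
  rcases le_or_gt (x (n+1) - x n) 0 with h | h
  · have : (x (n+1) - x n) / x n ≤ 0 := div_nonpos_of_nonpos_of_nonneg h h0.le
    linarith [hx.2.1 n]
  · exact div_le_self h.le h1


end Helpers

lemma le_add_all {a b : ℝ} (h : ∀ ε : ℝ, 0 < ε → a ≤ b + ε) : a ≤ b := by
  by_contra hc
  push_neg at hc
  linarith [h ((a - b)/2) (by linarith)]

/-- pointwise bounds, infimum, supremum and asymptotic oscillation of the
solution with the oscillating initial condition. -/
theorem oscillating_solution_bounds
    (f : ℝ → ℝ) (θ : ℝ) (hθ : θ ∈ Set.Ioo (0 : ℝ) 1) (hf : IsCombustion f θ)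
    (α β : ℝ) (hα : 0 ≤ α) (hαβ : α < β) (hβ : β < θ)
    (x : ℕ → ℝ) (hx : IsAdmissibleSeq x)
    (u0 : ℝ → ℝ) (hu0 : IsOscInit α β x u0)
    (u : ℝ → ℝ → ℝ) (hu : IsClassicalSolution f u0 u) :
    ∀ t, 0 ≤ t →
      (∀ y, α ≤ u t y ∧ u t y ≤ 1) ∧
      sInf (Set.range (u t)) = α ∧
      Filter.liminf (fun y => u t y) Filter.atTop = α ∧
      Filter.limsup (fun y => u t y) Filter.atTop = β ∧
      sSup (Set.range (u t)) = 1 ∧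
      Filter.Tendsto (fun y => u t y) Filter.atBot (nhds 1) := by
  obtain ⟨hfcont, hf2, hf3, hf4, hf5, -⟩ := hf
  obtain ⟨L, hL, hlip⟩ := f_lipschitz hθ hf2 hf3 hf5
  have hfnn : ∀ s, 0 ≤ f s := f_nonneg hf2 hf3 hf4
  have hu0cov := u0_le_beta hαβ hx hu0
  obtain ⟨hu0cont, hu0b, hu0neg, hu0ramp, hu0cl⟩ := hu0
  obtain ⟨hucont, hubd, huinit, ut, ux, uxx, -, -, -, hder⟩ := hu
  have hθ0 : (0:ℝ) < θ := hθ.1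
  have hθ1 : θ < 1 := hθ.2
  have hβ1 : β < 1 := lt_trans hβ hθ1
  have hα1 : α < 1 := lt_trans hαβ hβ1
  have hβ0 : 0 < β := lt_of_le_of_lt hα hαβ
  have hfα : f α = 0 := hf2 α (by linarith)
  have hfβ : f β = 0 := hf2 β hβ.le
  -- Barrier I1 : u ≥ α
  have I1 : ∀ t z, 0 ≤ t → α ≤ u t z := by
    have H := max_principle L hL (fun t z => u t z - α) 1
      (hucont.sub continuousOn_const)
      (fun t z ht => by
        have := (hubd t z ht).1
        show -1 ≤ u t z - α
        linarith)
      (fun z => by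
        show 0 ≤ u 0 z - α
        rw [huinit z]
        linarith [(hu0b z).1])
      (fun t ht => ⟨fun y => ux t y,
        fun y => ((hder t y ht).2.1).sub_const α,
        fun z => ⟨ut t z, uxx t z, ((hder t z ht).1).sub_const α,
          (hder t z ht).2.2.1, by
            have h := (hder t z ht).2.2.2
            show -L * |u t z - α| ≤ ut t z - uxx t z
            rw [h]
            nlinarith [mul_nonneg hL (abs_nonneg (u t z - α)), hfnn (u t z)]⟩⟩)
    intro t z ht
    have := H t z ht
    linarith
  -- Barrier I2 : u ≥ 1 - e^{t+z}
  have I2 : ∀ t z, 0 ≤ t → 0 ≤ u t z - 1 + bterm 1 1 1 0 t z := by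
    have H := max_principle L hL (fun t z => u t z - 1 + bterm 1 1 1 0 t z) 1
      ((hucont.sub continuousOn_const).add bterm_cont.continuousOn)
      (fun t z ht => by
        have h1 := (hubd t z ht).1
        have h2 := bterm_nonneg (c := 1) (A := 1) (B := 1) (C := 0) (by norm_num) t z
        show -1 ≤ u t z - 1 + bterm 1 1 1 0 t z
        linarith)
      (fun z => by
        show 0 ≤ u 0 z - 1 + bterm 1 1 1 0 0 z
        rw [huinit z]
        have hbv : bterm 1 1 1 0 0 z = Real.exp z := by
          simp only [bterm]
          norm_num
        rw [hbv]
        rcases le_or_gt z 0 with h | h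
        · rw [hu0neg z h]
          have := Real.exp_pos z
          linarith
        · rcases le_or_gt z 2 with h' | h'
          · rw [hu0ramp z ⟨h.le, h'⟩]
            nlinarith [Real.add_one_le_exp z]
          · have h1 := (hu0b z).1
            have h2 : (1:ℝ) ≤ Real.exp z := Real.one_le_exp (by linarith)
            linarith)
      (fun t ht => ⟨fun y => ux t y + 1 * bterm 1 1 1 0 t y,
        fun y => (((hder t y ht).2.1).sub_const 1).add (bterm_z t y),
        fun z => ⟨ut t z + 1 * bterm 1 1 1 0 t z,
          uxx t z + 1 * (1 * bterm 1 1 1 0 t z),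
          (((hder t z ht).1).sub_const 1).add (bterm_t t z),
          ((hder t z ht).2.2.1).add (bterm_zz t z), by
            have h := (hder t z ht).2.2.2
            show -L * |u t z - 1 + bterm 1 1 1 0 t z| ≤
              (ut t z + 1 * bterm 1 1 1 0 t z) -
              (uxx t z + 1 * (1 * bterm 1 1 1 0 t z))
            rw [h]
            nlinarith [mul_nonneg hL (abs_nonneg (u t z - 1 + bterm 1 1 1 0 t z)),
              hfnn (u t z)]⟩⟩)
    intro t z ht
    have := H t z ht
    simpa using this
  -- Barrier I3 : u ≤ β + (1-β)e^{(1+L)t - (z-2)}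
  have I3 : ∀ t z, 0 ≤ t → u t z ≤ β + bterm (1-β) (1+L) (-1) 2 t z := by
    have H := max_principle L hL (fun t z => β + bterm (1-β) (1+L) (-1) 2 t z - u t z) 1
      ((continuousOn_const.add bterm_cont.continuousOn).sub hucont)
      (fun t z ht => by
        have h1 := (hubd t z ht).2
        have h2 := bterm_nonneg (c := 1-β) (A := 1+L) (B := -1) (C := 2) (by linarith) t z
        show -1 ≤ β + bterm (1-β) (1+L) (-1) 2 t z - u t z
        linarith)
      (fun z => by
        show 0 ≤ β + bterm (1-β) (1+L) (-1) 2 0 z - u 0 z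
        rw [huinit z]
        rcases le_or_gt 2 z with h | h
        · have h1 := hu0cov z h
          have h2 := bterm_nonneg (c := 1-β) (A := 1+L) (B := -1) (C := 2) (by linarith) 0 z
          linarith
        · have h1 := (hu0b z).2
          have h2 : (1:ℝ) ≤ Real.exp ((1+L)*0 + (-1)*z + 2) :=
            Real.one_le_exp (by linarith)
          have h3 : (1-β) * 1 ≤ (1-β) * Real.exp ((1+L)*0 + (-1)*z + 2) :=
            mul_le_mul_of_nonneg_left h2 (by linarith)
          simp only [bterm]
          linarith)
      (fun t ht => ⟨fun y => (-1) * bterm (1-β) (1+L) (-1) 2 t y - ux t y,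
        fun y => ((bterm_z t y).const_add β).sub ((hder t y ht).2.1),
        fun z => ⟨(1+L) * bterm (1-β) (1+L) (-1) 2 t z - ut t z,
          (-1) * ((-1) * bterm (1-β) (1+L) (-1) 2 t z) - uxx t z,
          ((bterm_t t z).const_add β).sub ((hder t z ht).1),
          (bterm_zz t z).sub ((hder t z ht).2.2.1), by
            have heq := (hder t z ht).2.2.2
            have hE0 : 0 ≤ bterm (1-β) (1+L) (-1) 2 t z := bterm_nonneg (by linarith) t z
            have hfe := fest hlip hfβ (by linarith) hβ1.le hE0
              (hubd t z ht.le).1 (hubd t z ht.le).2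
            have habs : |u t z - (β + bterm (1-β) (1+L) (-1) 2 t z)|
                = |β + bterm (1-β) (1+L) (-1) 2 t z - u t z| := abs_sub_comm _ _
            rw [habs] at hfe
            show -L * |β + bterm (1-β) (1+L) (-1) 2 t z - u t z| ≤
              ((1+L) * bterm (1-β) (1+L) (-1) 2 t z - ut t z) -
              ((-1) * ((-1) * bterm (1-β) (1+L) (-1) 2 t z) - uxx t z)
            rw [heq]
            linarith⟩⟩)
    intro t z ht
    have := H t z ht
    linarith
  -- Barrier I4 : u ≤ α + barrier over α-plateau n
  have I4 : ∀ (n : ℕ) t z, 0 ≤ t → u t z ≤ α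
      + bterm (1-α) (1+L) (-1) (x (2*n) + 1) t z
      + bterm (1-α) (1+L) 1 (-(x (2*n+1) - 1)) t z := by
    intro n
    have hab : x (2*n) + 1 ≤ x (2*n+1) - 1 := by linarith [hx.2.1 (2*n)]
    have H := max_principle L hL (fun t z => α + bterm (1-α) (1+L) (-1) (x (2*n) + 1) t z
        + bterm (1-α) (1+L) 1 (-(x (2*n+1) - 1)) t z - u t z) 1
      (((continuousOn_const.add bterm_cont.continuousOn).add
        bterm_cont.continuousOn).sub hucont)
      (fun t z ht => by
        have h1 := (hubd t z ht).2
        have h2 := bterm_nonneg (c := 1-α) (A := 1+L) (B := -1) (C := x (2*n) + 1)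
          (by linarith) t z
        have h3 := bterm_nonneg (c := 1-α) (A := 1+L) (B := 1) (C := -(x (2*n+1) - 1))
          (by linarith) t z
        show -1 ≤ α + bterm (1-α) (1+L) (-1) (x (2*n) + 1) t z
          + bterm (1-α) (1+L) 1 (-(x (2*n+1) - 1)) t z - u t z
        linarith)
      (fun z => by
        show 0 ≤ α + bterm (1-α) (1+L) (-1) (x (2*n) + 1) 0 z
          + bterm (1-α) (1+L) 1 (-(x (2*n+1) - 1)) 0 z - u 0 z
        rw [huinit z]
        have h2 := bterm_nonneg (c := 1-α) (A := 1+L) (B := -1) (C := x (2*n) + 1)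
          (by linarith) 0 z
        have h3 := bterm_nonneg (c := 1-α) (A := 1+L) (B := 1) (C := -(x (2*n+1) - 1))
          (by linarith) 0 z
        rcases lt_or_ge z (x (2*n) + 1) with hc | hc
        · have he : (1:ℝ) ≤ Real.exp ((1+L)*0 + (-1)*z + (x (2*n) + 1)) :=
            Real.one_le_exp (by linarith)
          have h4 : (1-α) * 1 ≤ (1-α) * Real.exp ((1+L)*0 + (-1)*z + (x (2*n) + 1)) :=
            mul_le_mul_of_nonneg_left he (by linarith)
          have h5 := (hu0b z).2
          simp only [bterm] at h3 ⊢
          linarith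
        · rcases le_or_gt z (x (2*n+1) - 1) with hc' | hc'
          · have hval := (hu0cl n).1 z ⟨hc, hc'⟩
            rw [hval]
            linarith
          · have he : (1:ℝ) ≤ Real.exp ((1+L)*0 + 1*z + (-(x (2*n+1) - 1))) :=
              Real.one_le_exp (by linarith)
            have h4 : (1-α) * 1 ≤ (1-α) * Real.exp ((1+L)*0 + 1*z + (-(x (2*n+1) - 1))) :=
              mul_le_mul_of_nonneg_left he (by linarith)
            have h5 := (hu0b z).2
            simp only [bterm] at h2 ⊢
            linarith)
      (fun t ht => ⟨fun y => ((-1) * bterm (1-α) (1+L) (-1) (x (2*n) + 1) t y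
          + 1 * bterm (1-α) (1+L) 1 (-(x (2*n+1) - 1)) t y) - ux t y,
        fun y => (((bterm_z t y).const_add α).add (bterm_z t y)).sub ((hder t y ht).2.1),
        fun z => ⟨((1+L) * bterm (1-α) (1+L) (-1) (x (2*n) + 1) t z
            + (1+L) * bterm (1-α) (1+L) 1 (-(x (2*n+1) - 1)) t z) - ut t z,
          ((-1) * ((-1) * bterm (1-α) (1+L) (-1) (x (2*n) + 1) t z)
            + 1 * (1 * bterm (1-α) (1+L) 1 (-(x (2*n+1) - 1)) t z)) - uxx t z,
          (((bterm_t t z).const_add α).add (bterm_t t z)).sub ((hder t z ht).1),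
          ((bterm_zz t z).add (bterm_zz t z)).sub ((hder t z ht).2.2.1), by
            have heq := (hder t z ht).2.2.2
            have hE1 : 0 ≤ bterm (1-α) (1+L) (-1) (x (2*n) + 1) t z :=
              bterm_nonneg (by linarith) t z
            have hE2 : 0 ≤ bterm (1-α) (1+L) 1 (-(x (2*n+1) - 1)) t z :=
              bterm_nonneg (by linarith) t z
            have hfe := fest hlip hfα hα hα1.le (add_nonneg hE1 hE2)
              (hubd t z ht.le).1 (hubd t z ht.le).2
            have habs : |u t z - (α + (bterm (1-α) (1+L) (-1) (x (2*n) + 1) t z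
                + bterm (1-α) (1+L) 1 (-(x (2*n+1) - 1)) t z))|
                = |α + bterm (1-α) (1+L) (-1) (x (2*n) + 1) t z
                  + bterm (1-α) (1+L) 1 (-(x (2*n+1) - 1)) t z - u t z| := by
              rw [abs_sub_comm]
              ring_nf
            rw [habs] at hfe
            show -L * |α + bterm (1-α) (1+L) (-1) (x (2*n) + 1) t z
                + bterm (1-α) (1+L) 1 (-(x (2*n+1) - 1)) t z - u t z| ≤
              (((1+L) * bterm (1-α) (1+L) (-1) (x (2*n) + 1) t z
                + (1+L) * bterm (1-α) (1+L) 1 (-(x (2*n+1) - 1)) t z) - ut t z) -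
              (((-1) * ((-1) * bterm (1-α) (1+L) (-1) (x (2*n) + 1) t z)
                + 1 * (1 * bterm (1-α) (1+L) 1 (-(x (2*n+1) - 1)) t z)) - uxx t z)
            rw [heq]
            linarith⟩⟩)
    intro t z ht
    have := H t z ht
    linarith
  -- Barrier I5 : u ≥ β - barrier over β-plateau n
  have I5 : ∀ (n : ℕ) t z, 0 ≤ t →
      β - bterm β 1 (-1) (x (2*n+1) + 1) t z - bterm β 1 1 (-(x (2*n+2) - 1)) t z
        ≤ u t z := by
    intro n
    have hab : x (2*n+1) + 1 ≤ x (2*n+2) - 1 := by linarith [hx.2.1 (2*n+1)]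
    have H := max_principle L hL (fun t z => u t z - β
        + bterm β 1 (-1) (x (2*n+1) + 1) t z
        + bterm β 1 1 (-(x (2*n+2) - 1)) t z) 1
      (((hucont.sub continuousOn_const).add bterm_cont.continuousOn).add
        bterm_cont.continuousOn)
      (fun t z ht => by
        have h1 := (hubd t z ht).1
        have h2 := bterm_nonneg (c := β) (A := 1) (B := -1) (C := x (2*n+1) + 1)
          hβ0.le t z
        have h3 := bterm_nonneg (c := β) (A := 1) (B := 1) (C := -(x (2*n+2) - 1))
          hβ0.le t z
        show -1 ≤ u t z - β + bterm β 1 (-1) (x (2*n+1) + 1) t z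
          + bterm β 1 1 (-(x (2*n+2) - 1)) t z
        linarith)
      (fun z => by
        show 0 ≤ u 0 z - β + bterm β 1 (-1) (x (2*n+1) + 1) 0 z
          + bterm β 1 1 (-(x (2*n+2) - 1)) 0 z
        rw [huinit z]
        have h2 := bterm_nonneg (c := β) (A := 1) (B := -1) (C := x (2*n+1) + 1)
          hβ0.le 0 z
        have h3 := bterm_nonneg (c := β) (A := 1) (B := 1) (C := -(x (2*n+2) - 1))
          hβ0.le 0 z
        rcases lt_or_ge z (x (2*n+1) + 1) with hc | hc
        · have he : (1:ℝ) ≤ Real.exp (1*0 + (-1)*z + (x (2*n+1) + 1)) :=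
            Real.one_le_exp (by linarith)
          have h4 : β * 1 ≤ β * Real.exp (1*0 + (-1)*z + (x (2*n+1) + 1)) :=
            mul_le_mul_of_nonneg_left he hβ0.le
          have h5 := (hu0b z).1
          simp only [bterm] at h3 ⊢
          linarith
        · rcases le_or_gt z (x (2*n+2) - 1) with hc' | hc'
          · have hval := (hu0cl n).2.2.1 z ⟨hc, hc'⟩
            rw [hval]
            linarith
          · have he : (1:ℝ) ≤ Real.exp (1*0 + 1*z + (-(x (2*n+2) - 1))) :=
              Real.one_le_exp (by linarith)
            have h4 : β * 1 ≤ β * Real.exp (1*0 + 1*z + (-(x (2*n+2) - 1))) :=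
              mul_le_mul_of_nonneg_left he hβ0.le
            have h5 := (hu0b z).1
            simp only [bterm] at h2 ⊢
            linarith)
      (fun t ht => ⟨fun y => (ux t y + (-1) * bterm β 1 (-1) (x (2*n+1) + 1) t y)
          + 1 * bterm β 1 1 (-(x (2*n+2) - 1)) t y,
        fun y => ((((hder t y ht).2.1).sub_const β).add (bterm_z t y)).add (bterm_z t y),
        fun z => ⟨(ut t z + 1 * bterm β 1 (-1) (x (2*n+1) + 1) t z)
            + 1 * bterm β 1 1 (-(x (2*n+2) - 1)) t z,
          (uxx t z + (-1) * ((-1) * bterm β 1 (-1) (x (2*n+1) + 1) t z))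
            + 1 * (1 * bterm β 1 1 (-(x (2*n+2) - 1)) t z),
          ((((hder t z ht).1).sub_const β).add (bterm_t t z)).add (bterm_t t z),
          (((hder t z ht).2.2.1).add (bterm_zz t z)).add (bterm_zz t z), by
            have heq := (hder t z ht).2.2.2
            show -L * |u t z - β + bterm β 1 (-1) (x (2*n+1) + 1) t z
                + bterm β 1 1 (-(x (2*n+2) - 1)) t z| ≤
              ((ut t z + 1 * bterm β 1 (-1) (x (2*n+1) + 1) t z)
                + 1 * bterm β 1 1 (-(x (2*n+2) - 1)) t z) -
              ((uxx t z + (-1) * ((-1) * bterm β 1 (-1) (x (2*n+1) + 1) t z))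
                + 1 * (1 * bterm β 1 1 (-(x (2*n+2) - 1)) t z))
            rw [heq]
            nlinarith [mul_nonneg hL (abs_nonneg (u t z - β
              + bterm β 1 (-1) (x (2*n+1) + 1) t z
              + bterm β 1 1 (-(x (2*n+2) - 1)) t z)), hfnn (u t z)]⟩⟩)
    intro t z ht
    have := H t z ht
    linarith
  -- sequence limit facts
  have h2n : Tendsto (fun n : ℕ => 2*n) atTop atTop :=
    tendsto_atTop_mono (fun n => by simp only [id_eq]; omega) tendsto_id
  have h2n1 : Tendsto (fun n : ℕ => 2*n+1) atTop atTop :=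
    tendsto_atTop_mono (fun n => by simp only [id_eq]; omega) tendsto_id
  have hgap := gap_tendsto hx
  have hgapα : Tendsto (fun n : ℕ => x (2*n+1) - x (2*n)) atTop atTop := hgap.comp h2n
  have hgapβ : Tendsto (fun n : ℕ => x (2*n+2) - x (2*n+1)) atTop atTop := by
    have h := hgap.comp h2n1
    exact h.congr (fun n => by simp only [Function.comp_apply])
  have hxlbR : ∀ n : ℕ, (n:ℝ) ≤ x n := by
    intro n
    have h1 := xseq_lb hx n
    have h2 : (0:ℝ) ≤ (n:ℝ) := Nat.cast_nonneg n
    linarith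
  have hmono := xseq_mono hx
  have hmα : Tendsto (fun n : ℕ => (x (2*n) + 1 + (x (2*n+1) - 1))/2) atTop atTop := by
    apply tendsto_atTop_mono _ tendsto_natCast_atTop_atTop
    intro n
    have h1 := hxlbR (2*n)
    have h2 := hmono (2*n)
    have h3 : ((2*n : ℕ):ℝ) = 2*(n:ℝ) := by push_cast; ring
    rw [h3] at h1
    have h4 : (0:ℝ) ≤ (n:ℝ) := Nat.cast_nonneg n
    linarith
  have hmβ : Tendsto (fun n : ℕ => (x (2*n+1) + 1 + (x (2*n+2) - 1))/2) atTop atTop := by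
    apply tendsto_atTop_mono _ tendsto_natCast_atTop_atTop
    intro n
    have h1 := hxlbR (2*n+1)
    have h2 := hmono (2*n+1)
    rw [show 2*n+1+1 = 2*n+2 from by omega] at h2
    have h3 : ((2*n+1 : ℕ):ℝ) = 2*(n:ℝ)+1 := by push_cast; ring
    rw [h3] at h1
    have h4 : (0:ℝ) ≤ (n:ℝ) := Nat.cast_nonneg n
    linarith
  have hℓα : Tendsto (fun n : ℕ => ((x (2*n+1) - 1) - (x (2*n) + 1))/2) atTop atTop := by
    have h1 : Tendsto (fun n : ℕ => (x (2*n+1) - x (2*n)) + (-2)) atTop atTop :=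
      tendsto_atTop_add_const_right _ (-2) hgapα
    have h2 := h1.atTop_div_const (by norm_num : (0:ℝ) < 2)
    exact h2.congr (fun n => by ring)
  have hℓβ : Tendsto (fun n : ℕ => ((x (2*n+2) - 1) - (x (2*n+1) + 1))/2) atTop atTop := by
    have h1 : Tendsto (fun n : ℕ => (x (2*n+2) - x (2*n+1)) + (-2)) atTop atTop :=
      tendsto_atTop_add_const_right _ (-2) hgapβ
    have h2 := h1.atTop_div_const (by norm_num : (0:ℝ) < 2)
    exact h2.congr (fun n => by ring)
  -- per time t
  intro t ht
  have hc1 : (0:ℝ) < 1 - α := by linarith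
  have hlow : ∀ z, 1 - Real.exp (t + z) ≤ u t z := by
    intro z
    have h := I2 t z ht
    have e1 : bterm 1 1 1 0 t z = Real.exp (t + z) := by
      simp only [bterm]
      norm_num
    rw [e1] at h
    linarith
  have hαnear : ∀ ε : ℝ, 0 < ε → ∀ Y : ℝ, ∃ y, Y ≤ y ∧ u t y ≤ α + ε := by
    intro ε hε Y
    obtain ⟨n, hn1, hn2⟩ := ((hmα.eventually_ge_atTop Y).and
      (hℓα.eventually_ge_atTop ((1+L)*t - Real.log ((ε/2)/(1-α))))).exists
    refine ⟨(x (2*n) + 1 + (x (2*n+1) - 1))/2, hn1, ?_⟩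
    have h := I4 n t ((x (2*n) + 1 + (x (2*n+1) - 1))/2) ht
    simp only [bterm] at h
    rw [show (1+L)*t + (-1)*((x (2*n) + 1 + (x (2*n+1) - 1))/2) + (x (2*n)+1)
        = (1+L)*t - ((x (2*n+1) - 1) - (x (2*n) + 1))/2 from by ring] at h
    rw [show (1+L)*t + 1*((x (2*n) + 1 + (x (2*n+1) - 1))/2) + (-(x (2*n+1)-1))
        = (1+L)*t - ((x (2*n+1) - 1) - (x (2*n) + 1))/2 from by ring] at h
    have hs := exp_small hc1 (half_pos hε) _ hn2
    linarith
  have hβnear : ∀ ε : ℝ, 0 < ε → ∀ Y : ℝ, ∃ y, Y ≤ y ∧ β - ε ≤ u t y := by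
    intro ε hε Y
    obtain ⟨n, hn1, hn2⟩ := ((hmβ.eventually_ge_atTop Y).and
      (hℓβ.eventually_ge_atTop (1*t - Real.log ((ε/2)/β)))).exists
    refine ⟨(x (2*n+1) + 1 + (x (2*n+2) - 1))/2, hn1, ?_⟩
    have h := I5 n t ((x (2*n+1) + 1 + (x (2*n+2) - 1))/2) ht
    simp only [bterm] at h
    rw [show 1*t + (-1)*((x (2*n+1) + 1 + (x (2*n+2) - 1))/2) + (x (2*n+1)+1)
        = 1*t - ((x (2*n+2) - 1) - (x (2*n+1) + 1))/2 from by ring] at h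
    rw [show 1*t + 1*((x (2*n+1) + 1 + (x (2*n+2) - 1))/2) + (-(x (2*n+2)-1))
        = 1*t - ((x (2*n+2) - 1) - (x (2*n+1) + 1))/2 from by ring] at h
    have hs := exp_small hβ0 (half_pos hε) _ hn2
    linarith
  have hβtail : ∀ ε : ℝ, 0 < ε → ∀ᶠ y in atTop, u t y ≤ β + ε := by
    intro ε hε
    filter_upwards [eventually_ge_atTop ((1+L)*t + 2 - Real.log (ε/(1-β)))] with y hy
    have h := I3 t y ht
    simp only [bterm] at h
    rw [show (1+L)*t + (-1)*y + 2 = ((1+L)*t + 2) - y from by ring] at h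
    have hs := exp_small (show (0:ℝ) < 1 - β from by linarith) hε y hy
    linarith
  have hne : (Set.range (u t)).Nonempty := ⟨u t 0, Set.mem_range_self 0⟩
  have hbddB : BddBelow (Set.range (u t)) := by
    refine ⟨α, ?_⟩
    rintro v ⟨y, rfl⟩
    exact I1 t y ht
  have hbddA : BddAbove (Set.range (u t)) := by
    refine ⟨1, ?_⟩
    rintro v ⟨y, rfl⟩
    exact (hubd t y ht).2
  have hbddge : Filter.IsBoundedUnder (· ≥ ·) atTop (fun y => u t y) :=
    isBoundedUnder_of ⟨α, fun y => I1 t y ht⟩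
  have hbddle : Filter.IsBoundedUnder (· ≤ ·) atTop (fun y => u t y) :=
    isBoundedUnder_of ⟨1, fun y => (hubd t y ht).2⟩
  refine ⟨fun y => ⟨I1 t y ht, (hubd t y ht).2⟩, ?_, ?_, ?_, ?_, ?_⟩
  · -- sInf = α
    apply le_antisymm
    · apply le_add_all
      intro ε hε
      obtain ⟨y, -, hy⟩ := hαnear ε hε 0
      exact le_trans (csInf_le hbddB ⟨y, rfl⟩) hy
    · apply le_csInf hne
      rintro v ⟨y, rfl⟩
      exact I1 t y ht
  · -- liminf = α
    apply le_antisymm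
    · apply le_add_all
      intro ε hε
      apply Filter.liminf_le_of_frequently_le _ hbddge
      rw [Filter.frequently_atTop]
      intro Y
      obtain ⟨y, hy1, hy2⟩ := hαnear ε hε Y
      exact ⟨y, hy1, hy2⟩
    · exact Filter.le_liminf_of_le hbddle.isCoboundedUnder_ge
        (Filter.Eventually.of_forall (fun y => I1 t y ht))
  · -- limsup = β
    apply le_antisymm
    · apply le_add_all
      intro ε hε
      exact Filter.limsup_le_of_le hbddge.isCoboundedUnder_le (hβtail ε hε)
    · apply le_add_all
      intro ε hε
      have hfreq : ∃ᶠ y in atTop, β - ε ≤ u t y := by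
        rw [Filter.frequently_atTop]
        intro Y
        obtain ⟨y, hy1, hy2⟩ := hβnear ε hε Y
        exact ⟨y, hy1, hy2⟩
      have := Filter.le_limsup_of_frequently_le hfreq hbddle
      linarith
  · -- sSup = 1
    apply le_antisymm
    · apply csSup_le hne
      rintro v ⟨y, rfl⟩
      exact (hubd t y ht).2
    · apply le_add_all
      intro ε hε
      have he : Real.exp (t + (Real.log ε - t)) = ε := by
        rw [show t + (Real.log ε - t) = Real.log ε from by ring, Real.exp_log hε]
      have h := hlow (Real.log ε - t)
      rw [he] at h
      have h2 := le_csSup hbddA (⟨Real.log ε - t, rfl⟩ :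
        u t (Real.log ε - t) ∈ Set.range (u t))
      linarith
  · -- tendsto at -∞
    have h2 : Tendsto (fun y : ℝ => t + y) atBot atBot :=
      tendsto_atBot_add_const_left _ t tendsto_id
    have h3 := Real.tendsto_exp_atBot.comp h2
    have h4 : Tendsto (fun y : ℝ => 1 - Real.exp (t + y)) atBot (nhds 1) := by
      have := h3.const_sub 1
      simpa using this
    exact tendsto_of_tendsto_of_tendsto_of_le_of_le h4 tendsto_const_nhds hlow
      (fun y => (hubd t y ht).2)
end
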